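/- arXiv:1512.02919 — 5 statements merged into one kernel-verified Lean document; each statement's English description precedes it below -/
import Mathlib

section
/- Under the stated assumptions on the abstract evolution setting, if F ∈ W¹(H), Ξ = (ξ, χ) ∈ W²(M), and U is a solution of the evolution problem (⋆), then for all t ≥ 0: ‖U(t)‖_H ≤ C_lift ( ∫₀ᵗ ‖Ξ(τ)‖_M dτ + 2 ∫₀ᵗ ‖Ξ̇(τ)‖_M dτ ) + ∫₀ᵗ ‖F(τ)‖_H dτ. (Bound (8a) of Theorem 3.1.) -/
open Set MeasureTheory
open scoped RealInnerProductSpace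

open intervalIntegral in
private lemma ftc_norm_bound {E : Type*} [NormedAddCommGroup E] [NormedSpace ℝ E]
    [CompleteSpace E]
    (f f' : ℝ → E) (hf0 : f 0 = 0)
    (hderiv : ∀ s ∈ Ici (0:ℝ), HasDerivWithinAt f (f' s) (Ici 0) s)
    (cf' : ContinuousOn f' (Ici (0:ℝ))) :
    ∀ t ∈ Ici (0:ℝ), ‖f t‖ ≤ ∫ τ in (0:ℝ)..t, ‖f' τ‖ := by
  intro t ht
  have ht' : (0:ℝ) ≤ t := ht
  have hIccIci : Icc (0:ℝ) t ⊆ Ici 0 := Icc_subset_Ici_self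
  have cf : ContinuousOn f (Ici (0:ℝ)) := fun s hs => (hderiv s hs).continuousWithinAt
  have hInt : IntervalIntegrable f' volume 0 t := by
    apply ContinuousOn.intervalIntegrable
    rw [uIcc_of_le ht']
    exact cf'.mono hIccIci
  have hFTC : ∫ τ in (0:ℝ)..t, f' τ = f t - f 0 := by
    apply integral_eq_sub_of_hasDeriv_right_of_le ht' (cf.mono hIccIci) _ hInt
    intro x hx
    exact (hderiv x hx.1.le).mono (fun y hy => (hx.1.trans hy).le)
  have : f t = ∫ τ in (0:ℝ)..t, f' τ := by rw [hFTC, hf0, sub_zero]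
  rw [this]
  exact intervalIntegral.norm_integral_le_integral_norm ht'

open intervalIntegral in
private lemma energy_est {H : Type*} [NormedAddCommGroup H] [InnerProductSpace ℝ H]
    (g gd : ℝ → H) (h : ℝ → ℝ)
    (hg0 : g 0 = 0)
    (hderiv : ∀ s ∈ Ici (0:ℝ), HasDerivWithinAt g (gd s) (Ici 0) s)
    (cg : ContinuousOn g (Ici (0:ℝ))) (cgd : ContinuousOn gd (Ici (0:ℝ)))
    (ch : ContinuousOn h (Ici (0:ℝ)))
    (hhnn : ∀ s ∈ Ici (0:ℝ), 0 ≤ h s)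
    (hip : ∀ s ∈ Ici (0:ℝ), ⟪gd s, g s⟫ ≤ h s * ‖g s‖) :
    ∀ t ∈ Ici (0:ℝ), ‖g t‖ ≤ ∫ τ in (0:ℝ)..t, h τ := by
  intro t ht
  have ht' : (0:ℝ) ≤ t := ht
  have hIccIci : Icc (0:ℝ) t ⊆ Ici 0 := Icc_subset_Ici_self
  have hInt_h : IntervalIntegrable h volume 0 t := by
    apply ContinuousOn.intervalIntegrable
    rw [uIcc_of_le ht']
    exact ch.mono hIccIci
  refine le_of_forall_sub_le ?_
  intro ε hε
  set q : ℝ → ℝ := fun τ => ⟪g τ, g τ⟫ + ε ^ 2 with hqdef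
  have hqeq : ∀ τ, q τ = ‖g τ‖ ^ 2 + ε ^ 2 := fun τ => by
    rw [hqdef]; simp only; rw [real_inner_self_eq_norm_sq]
  have hqpos : ∀ τ, 0 < q τ := fun τ => by
    rw [hqeq]; positivity
  set ψ : ℝ → ℝ := fun τ => Real.sqrt (q τ) with hψdef
  set d : ℝ → ℝ := fun τ => (⟪g τ, gd τ⟫ + ⟪gd τ, g τ⟫) / (2 * Real.sqrt (q τ)) with hddef
  have hψderiv : ∀ s ∈ Ici (0:ℝ), HasDerivWithinAt ψ (d s) (Ici 0) s := fun s hs =>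
    (((hderiv s hs).inner ℝ (hderiv s hs)).add_const (ε ^ 2)).sqrt (ne_of_gt (hqpos s))
  have hglesqrt : ∀ τ, ‖g τ‖ ≤ Real.sqrt (q τ) := by
    intro τ
    rw [← Real.sqrt_sq (norm_nonneg (g τ))]
    apply Real.sqrt_le_sqrt
    rw [hqeq]; nlinarith [sq_nonneg ε, hε]
  have hd_le : ∀ s ∈ Ici (0:ℝ), d s ≤ h s := by
    intro s hs
    have h1 : ⟪gd s, g s⟫ ≤ h s * Real.sqrt (q s) := by
      refine (hip s hs).trans ?_
      exact mul_le_mul_of_nonneg_left (hglesqrt s) (hhnn s hs)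
    have hcomm : ⟪g s, gd s⟫ = ⟪gd s, g s⟫ := real_inner_comm _ _
    have hsq : 0 < Real.sqrt (q s) := Real.sqrt_pos.2 (hqpos s)
    rw [hddef]
    simp only
    rw [hcomm, div_le_iff₀ (by positivity : (0:ℝ) < 2 * Real.sqrt (q s))]
    nlinarith
  have cq : ContinuousOn q (Ici (0:ℝ)) := (ContinuousOn.inner cg cg).add continuousOn_const
  have cψ : ContinuousOn ψ (Ici (0:ℝ)) := Real.continuous_sqrt.comp_continuousOn cq
  have cd : ContinuousOn d (Ici (0:ℝ)) := by
    apply ContinuousOn.div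
    · exact (ContinuousOn.inner cg cgd).add (ContinuousOn.inner cgd cg)
    · exact continuousOn_const.mul (Real.continuous_sqrt.comp_continuousOn cq)
    · exact fun x _ => (mul_pos two_pos (Real.sqrt_pos.2 (hqpos x))).ne'
  have hInt_d : IntervalIntegrable d volume 0 t := by
    apply ContinuousOn.intervalIntegrable
    rw [uIcc_of_le ht']
    exact cd.mono hIccIci
  have hFTC : ∫ τ in (0:ℝ)..t, d τ = ψ t - ψ 0 := by
    apply integral_eq_sub_of_hasDeriv_right_of_le ht' (cψ.mono hIccIci) _ hInt_d
    intro x hx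
    exact (hψderiv x hx.1.le).mono (fun y hy => (hx.1.trans hy).le)
  have hψ0 : ψ 0 = ε := by
    rw [hψdef]; simp only
    rw [hqdef]; simp only
    rw [hg0, inner_zero_left, zero_add, Real.sqrt_sq hε.le]
  have hmono : ∫ τ in (0:ℝ)..t, d τ ≤ ∫ τ in (0:ℝ)..t, h τ :=
    integral_mono_on ht' hInt_d hInt_h (fun x hx => hd_le x hx.1)
  have h1 : ‖g t‖ ≤ ψ t := hglesqrt t
  rw [hFTC, hψ0] at hmono
  linarith

set_option maxHeartbeats 1000000 in
/-- **Bound (8a) of Theorem 3.1.**  If `F ∈ W¹(H)`, `Ξ = (ξ, χ) ∈ W²(M)` and `U`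
solves the evolution problem (⋆), then for all `t ≥ 0`:
`‖U(t)‖_H ≤ C_lift (∫₀ᵗ ‖Ξ‖ + 2∫₀ᵗ ‖Ξ̇‖) + ∫₀ᵗ ‖F‖`. -/
theorem H_norm_bound_abstract_evolution
    {H V M₁ M₂ : Type*}
    [NormedAddCommGroup H] [InnerProductSpace ℝ H] [CompleteSpace H]
    [NormedAddCommGroup V] [InnerProductSpace ℝ V] [CompleteSpace V]
    [NormedAddCommGroup M₁] [InnerProductSpace ℝ M₁] [CompleteSpace M₁]
    [NormedAddCommGroup M₂] [InnerProductSpace ℝ M₂] [CompleteSpace M₂]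
    -- continuous embedding of V into H
    (ι : V →L[ℝ] H) (hι : Function.Injective ι)
    -- the operators
    (Astar : V →L[ℝ] H) (B : V →L[ℝ] M₂) (G : M₁ →L[ℝ] H)
    (hB : Function.Surjective B)
    -- (i) norm equivalence
    (C₁ C₂ : ℝ) (hC₁ : 0 < C₁) (hC₂ : 0 < C₂)
    (hnorm : ∀ u : V, C₁ * ‖u‖ ≤ ‖ι u‖ + ‖Astar u‖ ∧ ‖ι u‖ + ‖Astar u‖ ≤ C₂ * ‖u‖)
    -- (ii) (A u, u)_H = 0 on D(A) = ker B
    (hskew : ∀ u : V, B u = 0 → ⟪Astar u, ι u⟫ = 0)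
    -- (iii) I ± A surjective from D(A) onto H
    (hsurjPlus : ∀ f : H, ∃ u : V, B u = 0 ∧ ι u + Astar u = f)
    (hsurjMinus : ∀ f : H, ∃ u : V, B u = 0 ∧ ι u - Astar u = f)
    -- (iv) lifting property
    (Clift : ℝ) (hClift : 0 < Clift)
    (hlift : ∀ Ξ : M₁ × M₂, ∃! u : V, ι u = Astar u + G Ξ.1 ∧ B u = Ξ.2)
    (hliftBound : ∀ (Ξ : M₁ × M₂) (u : V),
        (ι u = Astar u + G Ξ.1 ∧ B u = Ξ.2) → ‖ι u‖ + ‖u‖ ≤ Clift * ‖Ξ‖)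
    -- data: F ∈ W¹(H)
    (F F' : ℝ → H)
    (hF0 : F 0 = 0)
    (hFderiv : ∀ t ∈ Ici (0 : ℝ), HasDerivWithinAt F (F' t) (Ici 0) t)
    (hF'int : IntegrableOn F' (Ioi 0))
    -- data: Ξ = (ξ, χ) ∈ W²(M)
    (ξ : ℝ → M₁) (χ : ℝ → M₂) (Ξ' Ξ'' : ℝ → M₁ × M₂)
    (hΞ0 : (ξ 0, χ 0) = (0 : M₁ × M₂)) (hΞ'0 : Ξ' 0 = 0)
    (hΞderiv : ∀ t ∈ Ici (0 : ℝ), HasDerivWithinAt (fun τ => (ξ τ, χ τ)) (Ξ' t) (Ici 0) t)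
    (hΞ'deriv : ∀ t ∈ Ici (0 : ℝ), HasDerivWithinAt Ξ' (Ξ'' t) (Ici 0) t)
    (hΞ''int : IntegrableOn Ξ'' (Ioi 0))
    -- U is a solution of the evolution problem (⋆)
    (U : ℝ → V)
    (hUcont : ContinuousOn U (Ici 0))
    (hU0 : U 0 = 0)
    (hUB : ∀ t ∈ Ici (0 : ℝ), B (U t) = χ t)
    (hUode : ∀ t ∈ Ici (0 : ℝ),
        HasDerivWithinAt (fun τ => ι (U τ)) (Astar (U t) + G (ξ t) + F t) (Ici 0) t)
    :
    ∀ t ∈ Ici (0 : ℝ),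
      ‖ι (U t)‖ ≤
        Clift * ((∫ τ in (0:ℝ)..t, ‖(ξ τ, χ τ)‖) + 2 * ∫ τ in (0:ℝ)..t, ‖Ξ' τ‖) +
          ∫ τ in (0:ℝ)..t, ‖F τ‖ := by

  classical
  set L0 : M₁ × M₂ → V := fun P => (hlift P).choose with hL0def
  have hspec : ∀ P : M₁ × M₂, ι (L0 P) = Astar (L0 P) + G P.1 ∧ B (L0 P) = P.2 :=
    fun P => (hlift P).choose_spec.1
  have huniq : ∀ (P : M₁ × M₂) (u : V),
      (ι u = Astar u + G P.1 ∧ B u = P.2) → u = L0 P :=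
    fun P u h => (hlift P).choose_spec.2 u h
  have hLadd : ∀ p q : M₁ × M₂, L0 (p + q) = L0 p + L0 q := by
    intro p q
    refine (huniq _ _ ⟨?_, ?_⟩).symm
    · have h1 := (hspec p).1; have h2 := (hspec q).1
      simp only [Prod.fst_add, map_add, h1, h2]; abel
    · have h1 := (hspec p).2; have h2 := (hspec q).2
      simp only [Prod.snd_add, map_add, h1, h2]
  have hLsmul : ∀ (c : ℝ) (p : M₁ × M₂), L0 (c • p) = c • L0 p := by
    intro c p
    refine (huniq _ _ ⟨?_, ?_⟩).symm
    · have h1 := (hspec p).1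
      simp only [Prod.smul_fst, _root_.map_smul, h1, smul_add]
    · have h1 := (hspec p).2
      simp only [Prod.smul_snd, _root_.map_smul, h1]
  have hLbound : ∀ p : M₁ × M₂, ‖L0 p‖ ≤ Clift * ‖p‖ := fun p =>
    le_trans (le_add_of_nonneg_left (norm_nonneg _)) (hliftBound p _ (hspec p))
  set L : (M₁ × M₂) →L[ℝ] V :=
    LinearMap.mkContinuous
      { toFun := L0, map_add' := hLadd, map_smul' := hLsmul } Clift hLbound with hLdef
  have hLapp : ∀ p : M₁ × M₂, L p = L0 p := fun p => rfl
  have hWeq : ∀ s : ℝ, ι (L (ξ s, χ s)) = Astar (L (ξ s, χ s)) + G (ξ s) := by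
    intro s; rw [hLapp]; exact (hspec (ξ s, χ s)).1
  have hWB : ∀ s : ℝ, B (L (ξ s, χ s)) = χ s := by
    intro s; rw [hLapp]; exact (hspec (ξ s, χ s)).2
  have hιLbound : ∀ p : M₁ × M₂, ‖ι (L p)‖ ≤ Clift * ‖p‖ := by
    intro p; rw [hLapp]
    exact le_trans (le_add_of_nonneg_right (norm_nonneg _)) (hliftBound p _ (hspec p))
  -- basic continuity facts
  have cΘ : ContinuousOn (fun τ => (ξ τ, χ τ)) (Ici (0:ℝ)) :=
    fun s hs => (hΞderiv s hs).continuousWithinAt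
  have cΞ' : ContinuousOn Ξ' (Ici (0:ℝ)) := fun s hs => (hΞ'deriv s hs).continuousWithinAt
  have cF : ContinuousOn F (Ici (0:ℝ)) := fun s hs => (hFderiv s hs).continuousWithinAt
  -- the functions of the energy argument
  set g : ℝ → H := fun τ => ι (U τ) - ι (L (ξ τ, χ τ)) with hgdef
  set gd : ℝ → H := fun τ =>
    Astar (U τ - L (ξ τ, χ τ)) + (ι (L (ξ τ, χ τ)) - ι (L (Ξ' τ)) + F τ) with hgddef
  set h : ℝ → ℝ := fun τ => Clift * ‖(ξ τ, χ τ)‖ + Clift * ‖Ξ' τ‖ + ‖F τ‖ with hhdef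
  have cW : ContinuousOn (fun τ => L (ξ τ, χ τ)) (Ici (0:ℝ)) :=
    L.continuous.comp_continuousOn cΘ
  have cιW : ContinuousOn (fun τ => ι (L (ξ τ, χ τ))) (Ici (0:ℝ)) :=
    ι.continuous.comp_continuousOn cW
  have cιLΞ' : ContinuousOn (fun τ => ι (L (Ξ' τ))) (Ici (0:ℝ)) :=
    ι.continuous.comp_continuousOn (L.continuous.comp_continuousOn cΞ')
  have cg : ContinuousOn g (Ici (0:ℝ)) :=
    (ι.continuous.comp_continuousOn hUcont).sub cιW
  have cgd : ContinuousOn gd (Ici (0:ℝ)) :=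
    (Astar.continuous.comp_continuousOn (hUcont.sub cW)).add ((cιW.sub cιLΞ').add cF)
  have ch : ContinuousOn h (Ici (0:ℝ)) :=
    ((continuousOn_const.mul cΘ.norm).add (continuousOn_const.mul cΞ'.norm)).add cF.norm
  -- derivative of ι ∘ W
  have hWderiv : ∀ s ∈ Ici (0:ℝ),
      HasDerivWithinAt (fun τ => ι (L (ξ τ, χ τ))) (ι (L (Ξ' s))) (Ici 0) s := by
    intro s hs
    have := ((ι.comp L).hasFDerivAt).comp_hasDerivWithinAt s (hΞderiv s hs)
    exact this
  -- derivative of g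
  have hgderiv : ∀ s ∈ Ici (0:ℝ), HasDerivWithinAt g (gd s) (Ici 0) s := by
    intro s hs
    have h1 := (hUode s hs).sub (hWderiv s hs)
    have heq : Astar (U s) + G (ξ s) + F s - ι (L (Ξ' s)) = gd s := by
      rw [hgddef]
      simp only [map_sub]
      rw [hWeq s]
      abel
    rw [← heq]
    exact h1
  have hg0 : g 0 = 0 := by
    rw [hgdef]
    simp only
    rw [hU0, hΞ0, map_zero, map_zero, map_zero, sub_zero]
  have hhnn : ∀ s ∈ Ici (0:ℝ), 0 ≤ h s := by
    intro s _
    rw [hhdef]; simp only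
    have h1 := norm_nonneg (ξ s, χ s); have h2 := norm_nonneg (Ξ' s)
    have h3 := norm_nonneg (F s)
    nlinarith [hClift.le]
  have hip : ∀ s ∈ Ici (0:ℝ), ⟪gd s, g s⟫ ≤ h s * ‖g s‖ := by
    intro s hs
    have hB0 : B (U s - L (ξ s, χ s)) = 0 := by
      rw [map_sub, hUB s hs, hWB s, sub_self]
    have hz := hskew _ hB0
    have hgι : g s = ι (U s - L (ξ s, χ s)) := by rw [hgdef]; simp [map_sub]
    have e1 : ⟪gd s, g s⟫
        = ⟪Astar (U s - L (ξ s, χ s)), g s⟫ + ⟪ι (L (ξ s, χ s)) - ι (L (Ξ' s)) + F s, g s⟫ := by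
      rw [hgddef]; simp only; rw [inner_add_left]
    have e2 : ⟪Astar (U s - L (ξ s, χ s)), g s⟫ = 0 := by rw [hgι]; exact hz
    have hbn : ‖ι (L (ξ s, χ s)) - ι (L (Ξ' s)) + F s‖ ≤ h s := by
      have t1 := norm_add_le (ι (L (ξ s, χ s)) - ι (L (Ξ' s))) (F s)
      have t2 := norm_sub_le (ι (L (ξ s, χ s))) (ι (L (Ξ' s)))
      have t3 := hιLbound (ξ s, χ s)
      have t4 := hιLbound (Ξ' s)
      rw [hhdef]; simp only
      linarith
    calc ⟪gd s, g s⟫ = ⟪ι (L (ξ s, χ s)) - ι (L (Ξ' s)) + F s, g s⟫ := by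
          rw [e1, e2, zero_add]
      _ ≤ ‖ι (L (ξ s, χ s)) - ι (L (Ξ' s)) + F s‖ * ‖g s‖ := real_inner_le_norm _ _
      _ ≤ h s * ‖g s‖ := mul_le_mul_of_nonneg_right hbn (norm_nonneg _)
  have key := energy_est g gd h hg0 hgderiv cg cgd ch hhnn hip
  -- final assembly
  intro t ht
  have ht' : (0:ℝ) ≤ t := ht
  have hΘnorm : ‖(ξ t, χ t)‖ ≤ ∫ τ in (0:ℝ)..t, ‖Ξ' τ‖ := by
    have h0 : (fun τ => (ξ τ, χ τ)) 0 = (0 : M₁ × M₂) := hΞ0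
    exact ftc_norm_bound (fun τ => (ξ τ, χ τ)) Ξ' h0 hΞderiv cΞ' t ht
  have hWtb : ‖ι (L (ξ t, χ t))‖ ≤ Clift * ‖(ξ t, χ t)‖ := hιLbound (ξ t, χ t)
  have hsplit : ‖ι (U t)‖ ≤ ‖g t‖ + ‖ι (L (ξ t, χ t))‖ := by
    have e : ι (U t) = g t + ι (L (ξ t, χ t)) := by rw [hgdef]; simp
    rw [e]; exact norm_add_le _ _
  have hIccIci : Icc (0:ℝ) t ⊆ Ici 0 := Icc_subset_Ici_self
  have i1 : IntervalIntegrable (fun τ => Clift * ‖(ξ τ, χ τ)‖) volume 0 t := by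
    apply ContinuousOn.intervalIntegrable
    rw [uIcc_of_le ht']
    exact (continuousOn_const.mul cΘ.norm).mono hIccIci
  have i2 : IntervalIntegrable (fun τ => Clift * ‖Ξ' τ‖) volume 0 t := by
    apply ContinuousOn.intervalIntegrable
    rw [uIcc_of_le ht']
    exact (continuousOn_const.mul cΞ'.norm).mono hIccIci
  have i3 : IntervalIntegrable (fun τ => ‖F τ‖) volume 0 t := by
    apply ContinuousOn.intervalIntegrable
    rw [uIcc_of_le ht']
    exact (cF.norm).mono hIccIci
  have hInth : ∫ τ in (0:ℝ)..t, h τ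
      = Clift * (∫ τ in (0:ℝ)..t, ‖(ξ τ, χ τ)‖) + Clift * (∫ τ in (0:ℝ)..t, ‖Ξ' τ‖)
        + ∫ τ in (0:ℝ)..t, ‖F τ‖ := by
    rw [hhdef]
    rw [intervalIntegral.integral_add (i1.add i2) i3, intervalIntegral.integral_add i1 i2,
      intervalIntegral.integral_const_mul, intervalIntegral.integral_const_mul]
  have hkey := key t ht
  rw [hInth] at hkey
  have hC : Clift * ‖(ξ t, χ t)‖ ≤ Clift * ∫ τ in (0:ℝ)..t, ‖Ξ' τ‖ :=
    mul_le_mul_of_nonneg_left hΘnorm hClift.le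
  have hring : Clift * ((∫ τ in (0:ℝ)..t, ‖(ξ τ, χ τ)‖) + 2 * ∫ τ in (0:ℝ)..t, ‖Ξ' τ‖)
      = Clift * (∫ τ in (0:ℝ)..t, ‖(ξ τ, χ τ)‖) + Clift * (∫ τ in (0:ℝ)..t, ‖Ξ' τ‖)
        + Clift * (∫ τ in (0:ℝ)..t, ‖Ξ' τ‖) := by ring
  rw [hring]
  linarith
end

section
/- Under the stated assumptions on the abstract evolution setting, if F ∈ W¹(H), Ξ = (ξ, χ) ∈ W²(M), and U is a solution of the evolution problem (⋆), then for all t ≥ 0: ‖U̇(t)‖_H ≤ C_lift ( ∫₀ᵗ ‖Ξ̇(τ)‖_M dτ + 2 ∫₀ᵗ ‖Ξ̈(τ)‖_M dτ ) + ∫₀ᵗ ‖Ḟ(τ)‖_H dτ. (Bound (8b) of Theorem 3.1.) -/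
open Set MeasureTheory
open Filter Topology
open scoped RealInnerProductSpace

section Aux

variable {H : Type*} [NormedAddCommGroup H] [InnerProductSpace ℝ H]

lemma energy_estimate (f f' : ℝ → H) (b : ℝ → ℝ) (hbcont : Continuous b)
    (hb0 : ∀ t, 0 ≤ b t)
    (hf : ∀ t ∈ Ici (0:ℝ), HasDerivWithinAt f (f' t) (Ici 0) t)
    (hip : ∀ t ∈ Ici (0:ℝ), ⟪f' t, f t⟫ ≤ b t * ‖f t‖) :
    ∀ t ∈ Ici (0:ℝ), ‖f t‖ ≤ ‖f 0‖ + ∫ τ in (0:ℝ)..t, b τ := by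
  intro t ht
  have key : ∀ ε : ℝ, 0 < ε → ‖f t‖ ≤ (‖f 0‖ + ∫ τ in (0:ℝ)..t, b τ) + ε := by
    intro ε hε
    set φ : ℝ → ℝ := fun s => ⟪f s, f s⟫ + ε ^ 2 with hφdef
    have hφpos : ∀ s, 0 < φ s := fun s => by
      have := real_inner_self_nonneg (x := f s); positivity
    have hφnorm : ∀ s, φ s = ‖f s‖ ^ 2 + ε ^ 2 := fun s => by
      simp only [hφdef, real_inner_self_eq_norm_sq]
    have hφsqrt : ∀ s, ‖f s‖ ≤ Real.sqrt (φ s) := by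
      intro s
      rw [hφnorm s]
      have h1 : ‖f s‖ = Real.sqrt (‖f s‖ ^ 2) := (Real.sqrt_sq (norm_nonneg _)).symm
      rw [h1]
      exact Real.sqrt_le_sqrt (by nlinarith [norm_nonneg (f s), Real.sq_sqrt (le_of_lt (hφpos s))])
    set θ : ℝ → ℝ := fun s => (∫ τ in (0:ℝ)..s, b τ) - Real.sqrt (φ s) with hθdef
    have hfc : ContinuousOn f (Ici 0) := fun s hs => (hf s hs).continuousWithinAt
    have hθcont : ContinuousOn θ (Ici 0) := by
      apply ContinuousOn.sub
      · exact (intervalIntegral.continuous_primitive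
          (fun a b => hbcont.intervalIntegrable a b) 0).continuousOn
      · exact Real.continuous_sqrt.comp_continuousOn
          ((hfc.inner hfc).add continuousOn_const)
    have hmono : MonotoneOn θ (Ici 0) := by
      apply monotoneOn_of_hasDerivWithinAt_nonneg (convex_Ici 0) hθcont
        (f' := fun x => b x - (⟪f x, f' x⟫ + ⟪f' x, f x⟫) / (2 * Real.sqrt (φ x)))
      · intro x hx
        rw [interior_Ici] at hx ⊢
        apply HasDerivWithinAt.sub
        · exact (intervalIntegral.integral_hasDerivAt_right
            (hbcont.intervalIntegrable 0 x)
            (hbcont.stronglyMeasurableAtFilter volume (𝓝 x)) hbcont.continuousAt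
            ).hasDerivWithinAt
        · have hφd : HasDerivWithinAt φ (⟪f x, f' x⟫ + ⟪f' x, f x⟫) (Ioi 0) x := by
            have := ((hf x (mem_Ici.mpr (le_of_lt hx))).inner ℝ (hf x (mem_Ici.mpr (le_of_lt hx)))).add_const (ε ^ 2)
            exact this.mono Ioi_subset_Ici_self
          exact hφd.sqrt (ne_of_gt (hφpos x))
      · intro x hx
        rw [interior_Ici] at hx
        have hxI : x ∈ Ici (0:ℝ) := mem_Ici.mpr (le_of_lt hx)
        have h1 : ⟪f x, f' x⟫ + ⟪f' x, f x⟫ = 2 * ⟪f' x, f x⟫ := by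
          rw [real_inner_comm]; ring
        have h2 : ⟪f' x, f x⟫ ≤ b x * Real.sqrt (φ x) := by
          calc ⟪f' x, f x⟫ ≤ b x * ‖f x‖ := hip x hxI
          _ ≤ b x * Real.sqrt (φ x) := mul_le_mul_of_nonneg_left (hφsqrt x) (hb0 x)
        have hs : 0 < Real.sqrt (φ x) := Real.sqrt_pos.mpr (hφpos x)
        rw [h1, sub_nonneg, div_le_iff₀ (by positivity)]
        nlinarith
    have h0t := hmono self_mem_Ici ht ht
    have hθ0 : θ 0 = - Real.sqrt (φ 0) := by simp [hθdef]
    have hsq0 : Real.sqrt (φ 0) ≤ ‖f 0‖ + ε := by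
      rw [hφnorm 0]
      have : Real.sqrt (‖f 0‖ ^ 2 + ε ^ 2) ≤ Real.sqrt ((‖f 0‖ + ε) ^ 2) :=
        Real.sqrt_le_sqrt (by nlinarith [norm_nonneg (f 0)])
      rwa [Real.sqrt_sq (by positivity)] at this
    have := hφsqrt t
    simp only [hθdef, hθ0, intervalIntegral.integral_same] at h0t ⊢
    linarith
  by_contra hcon
  push_neg at hcon
  have := key ((‖f t‖ - (‖f 0‖ + ∫ τ in (0:ℝ)..t, b τ)) / 2) (by linarith)
  linarith

lemma primitive_diff (n : ℝ → ℝ) (hint : ∀ a b, IntervalIntegrable n volume a b) (a b : ℝ) :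
    (∫ x in (0:ℝ)..b, n x) - (∫ x in (0:ℝ)..a, n x) = ∫ x in a..b, n x := by
  rw [← intervalIntegral.integral_add_adjacent_intervals (hint 0 a) (hint a b)]
  ring

lemma primitive_mono (n : ℝ → ℝ) (hn0 : ∀ τ, 0 ≤ n τ)
    (hint : ∀ a b, IntervalIntegrable n volume a b) :
    Monotone (fun s => ∫ x in (0:ℝ)..s, n x) := by
  intro a b hab
  have h := primitive_diff n hint a b
  have : 0 ≤ ∫ x in a..b, n x := intervalIntegral.integral_nonneg hab (fun x _ => hn0 x)
  simp only at h ⊢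
  linarith

lemma primitive_shift_integral_le (n : ℝ → ℝ) (hn0 : ∀ τ, 0 ≤ n τ)
    (hint : ∀ a b, IntervalIntegrable n volume a b) {t h : ℝ} (ht : 0 ≤ t) (hh : 0 < h) :
    ∫ τ in (0:ℝ)..t, ((∫ x in (0:ℝ)..(τ+h), n x) - ∫ x in (0:ℝ)..τ, n x)
      ≤ h * ∫ x in (0:ℝ)..(t+h), n x := by
  set Φ : ℝ → ℝ := fun s => ∫ x in (0:ℝ)..s, n x with hΦdef
  have ΦC : Continuous Φ := intervalIntegral.continuous_primitive hint 0
  have Φmono : Monotone Φ := primitive_mono n hn0 hint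
  have Φ0 : Φ 0 = 0 := by simp [hΦdef]
  have hi1 : IntervalIntegrable (fun τ => Φ (τ + h)) volume 0 t :=
    (ΦC.comp (continuous_id.add continuous_const)).intervalIntegrable 0 t
  have hi2 : IntervalIntegrable Φ volume 0 t := ΦC.intervalIntegrable 0 t
  have hsplit : (∫ τ in (0:ℝ)..t, (Φ (τ + h) - Φ τ))
      = (∫ τ in (0:ℝ)..t, Φ (τ + h)) - ∫ τ in (0:ℝ)..t, Φ τ :=
    intervalIntegral.integral_sub hi1 hi2
  have hshift : (∫ τ in (0:ℝ)..t, Φ (τ + h)) = ∫ τ in h..(t+h), Φ τ := by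
    have := intervalIntegral.integral_comp_add_right (a := (0:ℝ)) (b := t) Φ h
    simpa using this
  have hadj1 : (∫ τ in (0:ℝ)..(t+h), Φ τ)
      = (∫ τ in (0:ℝ)..h, Φ τ) + ∫ τ in h..(t+h), Φ τ :=
    (intervalIntegral.integral_add_adjacent_intervals (ΦC.intervalIntegrable 0 h)
      (ΦC.intervalIntegrable h (t+h))).symm
  have hadj2 : (∫ τ in (0:ℝ)..(t+h), Φ τ)
      = (∫ τ in (0:ℝ)..t, Φ τ) + ∫ τ in t..(t+h), Φ τ :=
    (intervalIntegral.integral_add_adjacent_intervals (ΦC.intervalIntegrable 0 t)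
      (ΦC.intervalIntegrable t (t+h))).symm
  have h0h : 0 ≤ ∫ τ in (0:ℝ)..h, Φ τ :=
    intervalIntegral.integral_nonneg (le_of_lt hh)
      (fun x hx => by rw [← Φ0]; exact Φmono hx.1)
  have hup : (∫ τ in t..(t+h), Φ τ) ≤ h * Φ (t+h) := by
    have : (∫ τ in t..(t+h), Φ τ) ≤ ∫ _ in t..(t+h), Φ (t+h) := by
      apply intervalIntegral.integral_mono_on (by linarith)
        (ΦC.intervalIntegrable t (t+h)) intervalIntegrable_const
      exact fun x hx => Φmono hx.2
    simpa [intervalIntegral.integral_const, smul_eq_mul] using this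
  rw [hsplit, hshift]
  linarith

end Aux

lemma norm_diff_le_integral {E : Type*} [NormedAddCommGroup E] [NormedSpace ℝ E] [CompleteSpace E]
    (f f' : ℝ → E)
    (hf : ∀ x ∈ Ici (0:ℝ), HasDerivWithinAt f (f' x) (Ici 0) x)
    {a b : ℝ} (ha : 0 ≤ a) (hab : a ≤ b)
    (hint : IntervalIntegrable f' volume a b) :
    ‖f b - f a‖ ≤ ∫ x in a..b, ‖f' x‖ := by
  have hcont : ContinuousOn f (Icc a b) := fun x hx =>
    ((hf x (le_trans ha hx.1)).continuousWithinAt).mono (fun y hy => le_trans ha hy.1)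
  have hderiv : ∀ x ∈ Ioo a b, HasDerivWithinAt f (f' x) (Ioi x) x := fun x hx =>
    (hf x (le_trans ha (le_of_lt hx.1))).mono
      (fun y hy => le_trans (le_trans ha (le_of_lt hx.1)) (le_of_lt hy))
  rw [← intervalIntegral.integral_eq_sub_of_hasDeriv_right_of_le hab hcont hderiv hint]
  exact intervalIntegral.norm_integral_le_integral_norm hab

lemma slope_tendsto_right {E : Type*} [NormedAddCommGroup E] [NormedSpace ℝ E]
    (f : ℝ → E) (d : E) {t : ℝ} (ht : 0 ≤ t)
    (hf : HasDerivWithinAt f d (Ici 0) t) :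
    Tendsto (fun h : ℝ => h⁻¹ • (f (t+h) - f t)) (𝓝[>] 0) (𝓝 d) := by
  have h1 : Tendsto (fun h : ℝ => t + h) (𝓝[>] (0:ℝ)) (𝓝[>] t) := by
    apply tendsto_nhdsWithin_of_tendsto_nhds_of_eventually_within
    · have : Tendsto (fun h : ℝ => t + h) (𝓝 (0:ℝ)) (𝓝 t) := by
        simpa using (continuous_add_left t).tendsto (0:ℝ)
      exact this.mono_left nhdsWithin_le_nhds
    · filter_upwards [self_mem_nhdsWithin] with h hh
      exact by simpa [mem_Ioi] using (by linarith [mem_Ioi.mp hh] : t < t + h)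
  have h2 : (𝓝[>] t : Filter ℝ) ≤ 𝓝[Ici 0 \ {t}] t :=
    nhdsWithin_mono t (fun x hx => ⟨le_trans ht (le_of_lt hx), ne_of_gt hx⟩)
  have h3 := (hasDerivWithinAt_iff_tendsto_slope.mp hf).comp (h1.mono_right h2)
  apply h3.congr
  intro h
  simp [Function.comp, slope_def_module, add_sub_cancel_left]

/-- **Bound (8b) of Theorem 3.1.**  If `F ∈ W¹(H)`, `Ξ = (ξ, χ) ∈ W²(M)` and `U`
solves the evolution problem (⋆), then for all `t ≥ 0` the time derivative
`U̇(t) = A⋆U(t) + Gξ(t) + F(t)` satisfies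
`‖U̇(t)‖_H ≤ C_lift (∫₀ᵗ ‖Ξ̇‖ + 2∫₀ᵗ ‖Ξ̈‖) + ∫₀ᵗ ‖Ḟ‖`. -/
theorem H_norm_bound_derivative_abstract_evolution
    {H V M₁ M₂ : Type*}
    [NormedAddCommGroup H] [InnerProductSpace ℝ H] [CompleteSpace H]
    [NormedAddCommGroup V] [InnerProductSpace ℝ V] [CompleteSpace V]
    [NormedAddCommGroup M₁] [InnerProductSpace ℝ M₁] [CompleteSpace M₁]
    [NormedAddCommGroup M₂] [InnerProductSpace ℝ M₂] [CompleteSpace M₂]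
    -- continuous embedding of V into H
    (ι : V →L[ℝ] H) (hι : Function.Injective ι)
    -- the operators
    (Astar : V →L[ℝ] H) (B : V →L[ℝ] M₂) (G : M₁ →L[ℝ] H)
    (hB : Function.Surjective B)
    -- (i) norm equivalence
    (C₁ C₂ : ℝ) (hC₁ : 0 < C₁) (hC₂ : 0 < C₂)
    (hnorm : ∀ u : V, C₁ * ‖u‖ ≤ ‖ι u‖ + ‖Astar u‖ ∧ ‖ι u‖ + ‖Astar u‖ ≤ C₂ * ‖u‖)
    -- (ii) (A u, u)_H = 0 on D(A) = ker B
    (hskew : ∀ u : V, B u = 0 → ⟪Astar u, ι u⟫ = 0)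
    -- (iii) I ± A surjective from D(A) onto H
    (hsurjPlus : ∀ f : H, ∃ u : V, B u = 0 ∧ ι u + Astar u = f)
    (hsurjMinus : ∀ f : H, ∃ u : V, B u = 0 ∧ ι u - Astar u = f)
    -- (iv) lifting property
    (Clift : ℝ) (hClift : 0 < Clift)
    (hlift : ∀ Ξ : M₁ × M₂, ∃! u : V, ι u = Astar u + G Ξ.1 ∧ B u = Ξ.2)
    (hliftBound : ∀ (Ξ : M₁ × M₂) (u : V),
        (ι u = Astar u + G Ξ.1 ∧ B u = Ξ.2) → ‖ι u‖ + ‖u‖ ≤ Clift * ‖Ξ‖)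
    -- data: F ∈ W¹(H)
    (F F' : ℝ → H)
    (hF0 : F 0 = 0)
    (hFderiv : ∀ t ∈ Ici (0 : ℝ), HasDerivWithinAt F (F' t) (Ici 0) t)
    (hF'int : IntegrableOn F' (Ioi 0))
    -- data: Ξ = (ξ, χ) ∈ W²(M)
    (ξ : ℝ → M₁) (χ : ℝ → M₂) (Ξ' Ξ'' : ℝ → M₁ × M₂)
    (hΞ0 : (ξ 0, χ 0) = (0 : M₁ × M₂)) (hΞ'0 : Ξ' 0 = 0)
    (hΞderiv : ∀ t ∈ Ici (0 : ℝ), HasDerivWithinAt (fun τ => (ξ τ, χ τ)) (Ξ' t) (Ici 0) t)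
    (hΞ'deriv : ∀ t ∈ Ici (0 : ℝ), HasDerivWithinAt Ξ' (Ξ'' t) (Ici 0) t)
    (hΞ''int : IntegrableOn Ξ'' (Ioi 0))
    -- U is a solution of the evolution problem (⋆)
    (U : ℝ → V)
    (hUcont : ContinuousOn U (Ici 0))
    (hU0 : U 0 = 0)
    (hUB : ∀ t ∈ Ici (0 : ℝ), B (U t) = χ t)
    (hUode : ∀ t ∈ Ici (0 : ℝ),
        HasDerivWithinAt (fun τ => ι (U τ)) (Astar (U t) + G (ξ t) + F t) (Ici 0) t)
    :
    ∀ t ∈ Ici (0 : ℝ),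
      ‖Astar (U t) + G (ξ t) + F t‖ ≤
        Clift * ((∫ τ in (0:ℝ)..t, ‖Ξ' τ‖) + 2 * ∫ τ in (0:ℝ)..t, ‖Ξ'' τ‖) +
          ∫ τ in (0:ℝ)..t, ‖F' τ‖ := by
  classical
  -- the lift map
  choose L hLP hLuniq using hlift
  have hLadd : ∀ m m' : M₁ × M₂, L (m + m') = L m + L m' := by
    intro m m'
    refine (hLuniq (m + m') (L m + L m') ⟨?_, ?_⟩).symm
    · rw [map_add, (hLP m).1, (hLP m').1, map_add, Prod.fst_add, map_add]
      abel
    · rw [map_add, (hLP m).2, (hLP m').2, Prod.snd_add]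
  have hLsmul : ∀ (c : ℝ) (m : M₁ × M₂), L (c • m) = c • L m := by
    intro c m
    refine (hLuniq (c • m) (c • L m) ⟨?_, ?_⟩).symm
    · rw [_root_.map_smul, (hLP m).1, _root_.map_smul, Prod.smul_fst, _root_.map_smul, smul_add]
    · rw [_root_.map_smul, (hLP m).2, Prod.smul_snd]
  have hLbound : ∀ m : M₁ × M₂, ‖L m‖ ≤ Clift * ‖m‖ := by
    intro m
    have h1 := hliftBound m (L m) (hLP m)
    have h2 := norm_nonneg (ι (L m))
    linarith
  set Llin : M₁ × M₂ →ₗ[ℝ] V :=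
    { toFun := L, map_add' := hLadd, map_smul' := hLsmul } with hLlin
  set LC : M₁ × M₂ →L[ℝ] V := Llin.mkContinuous Clift hLbound with hLC
  have hLCapp : ∀ m, LC m = L m := fun m => rfl
  set ιL : M₁ × M₂ →L[ℝ] H := ι.comp LC with hιL
  have hιLapp : ∀ m, ιL m = ι (L m) := fun m => rfl
  have hιLnorm : ∀ m : M₁ × M₂, ‖ιL m‖ ≤ Clift * ‖m‖ := by
    intro m
    have h1 := hliftBound m (L m) (hLP m)
    have h2 := norm_nonneg (L m)
    rw [hιLapp]
    linarith
  -- data abbreviations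
  set Ξp : ℝ → M₁ × M₂ := fun τ => (ξ τ, χ τ) with hΞp
  set D : ℝ → H := fun τ => Astar (U τ) + G (ξ τ) + F τ with hD
  have hξ0 : ξ 0 = 0 := congrArg Prod.fst hΞ0
  have hΞp0 : Ξp 0 = 0 := by rw [hΞp]; exact hΞ0
  -- continuity facts
  have hΞ'cont : ContinuousOn Ξ' (Ici 0) := fun s hs => (hΞ'deriv s hs).continuousWithinAt
  have hΞpcont : ContinuousOn Ξp (Ici 0) := fun s hs => (hΞderiv s hs).continuousWithinAt
  have hFcont : ContinuousOn F (Ici 0) := fun s hs => (hFderiv s hs).continuousWithinAt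
  -- the three comparison densities
  set n₁ : ℝ → ℝ := fun τ => ‖Ξ' (max τ 0)‖ with hn₁
  set n₂ : ℝ → ℝ := (Ioi (0:ℝ)).indicator (fun τ => ‖Ξ'' τ‖) with hn₂
  set n₃ : ℝ → ℝ := (Ioi (0:ℝ)).indicator (fun τ => ‖F' τ‖) with hn₃
  have hn₁0 : ∀ τ, 0 ≤ n₁ τ := fun τ => norm_nonneg _
  have hn₂0 : ∀ τ, 0 ≤ n₂ τ := fun τ => Set.indicator_nonneg (fun x _ => norm_nonneg _) τ
  have hn₃0 : ∀ τ, 0 ≤ n₃ τ := fun τ => Set.indicator_nonneg (fun x _ => norm_nonneg _) τ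
  have hn₁cont : Continuous n₁ := by
    have : Continuous fun τ : ℝ => Ξ' (max τ 0) :=
      hΞ'cont.comp_continuous (continuous_id.max continuous_const)
        (fun x => le_max_right x 0)
    exact this.norm
  have hn₁int : ∀ a b, IntervalIntegrable n₁ volume a b := fun a b =>
    hn₁cont.intervalIntegrable a b
  have hn₂int : ∀ a b, IntervalIntegrable n₂ volume a b := fun a b =>
    (MeasureTheory.IntegrableOn.integrable_indicator hΞ''int.norm measurableSet_Ioi).intervalIntegrable
  have hn₃int : ∀ a b, IntervalIntegrable n₃ volume a b := fun a b =>
    (MeasureTheory.IntegrableOn.integrable_indicator hF'int.norm measurableSet_Ioi).intervalIntegrable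
  -- agreement of comparison densities with the actual norms on [a,b] ⊆ [0,∞)
  have hagree₁ : ∀ a b : ℝ, 0 ≤ a → a ≤ b →
      (∫ x in a..b, ‖Ξ' x‖) = ∫ x in a..b, n₁ x := by
    intro a b ha hab
    apply intervalIntegral.integral_congr
    intro x hx
    rw [uIcc_of_le hab] at hx
    rw [hn₁]
    simp only [max_eq_left (le_trans ha hx.1)]
  have hagree₂ : ∀ a b : ℝ, 0 ≤ a → a ≤ b →
      (∫ x in a..b, ‖Ξ'' x‖) = ∫ x in a..b, n₂ x := by
    intro a b ha hab
    rw [intervalIntegral.integral_of_le hab, intervalIntegral.integral_of_le hab]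
    apply setIntegral_congr_fun measurableSet_Ioc
    intro x hx
    rw [hn₂]
    rw [Set.indicator_of_mem (show x ∈ Ioi (0:ℝ) from lt_of_le_of_lt ha hx.1)]
  have hagree₃ : ∀ a b : ℝ, 0 ≤ a → a ≤ b →
      (∫ x in a..b, ‖F' x‖) = ∫ x in a..b, n₃ x := by
    intro a b ha hab
    rw [intervalIntegral.integral_of_le hab, intervalIntegral.integral_of_le hab]
    apply setIntegral_congr_fun measurableSet_Ioc
    intro x hx
    rw [hn₃]
    rw [Set.indicator_of_mem (show x ∈ Ioi (0:ℝ) from lt_of_le_of_lt ha hx.1)]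
  -- interval integrability of the raw derivatives on [a,b] ⊆ [0,∞)
  have hΞ'ii : ∀ a b : ℝ, 0 ≤ a → a ≤ b → IntervalIntegrable Ξ' volume a b := by
    intro a b ha hab
    apply ContinuousOn.intervalIntegrable
    apply hΞ'cont.mono
    rw [uIcc_of_le hab]
    exact fun y hy => le_trans ha hy.1
  have hΞ''ii : ∀ a b : ℝ, 0 ≤ a → a ≤ b → IntervalIntegrable Ξ'' volume a b := by
    intro a b ha hab
    rw [intervalIntegrable_iff_integrableOn_Ioc_of_le hab]
    exact hΞ''int.mono_set (fun x hx => lt_of_le_of_lt ha hx.1)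
  have hF'ii : ∀ a b : ℝ, 0 ≤ a → a ≤ b → IntervalIntegrable F' volume a b := by
    intro a b ha hab
    rw [intervalIntegrable_iff_integrableOn_Ioc_of_le hab]
    exact hF'int.mono_set (fun x hx => lt_of_le_of_lt ha hx.1)
  -- difference bounds
  have hdiff₁ : ∀ a b : ℝ, 0 ≤ a → a ≤ b →
      ‖Ξp b - Ξp a‖ ≤ (∫ x in (0:ℝ)..b, n₁ x) - ∫ x in (0:ℝ)..a, n₁ x := by
    intro a b ha hab
    rw [primitive_diff n₁ hn₁int a b, ← hagree₁ a b ha hab]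
    exact norm_diff_le_integral Ξp Ξ' hΞderiv ha hab (hΞ'ii a b ha hab)
  have hdiff₂ : ∀ a b : ℝ, 0 ≤ a → a ≤ b →
      ‖Ξ' b - Ξ' a‖ ≤ (∫ x in (0:ℝ)..b, n₂ x) - ∫ x in (0:ℝ)..a, n₂ x := by
    intro a b ha hab
    rw [primitive_diff n₂ hn₂int a b, ← hagree₂ a b ha hab]
    exact norm_diff_le_integral Ξ' Ξ'' hΞ'deriv ha hab (hΞ''ii a b ha hab)
  have hdiff₃ : ∀ a b : ℝ, 0 ≤ a → a ≤ b →
      ‖F b - F a‖ ≤ (∫ x in (0:ℝ)..b, n₃ x) - ∫ x in (0:ℝ)..a, n₃ x := by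
    intro a b ha hab
    rw [primitive_diff n₃ hn₃int a b, ← hagree₃ a b ha hab]
    exact norm_diff_le_integral F F' hFderiv ha hab (hF'ii a b ha hab)
  intro t ht
  rw [mem_Ici] at ht
  -- the master inequality for a fixed positive step h
  have master : ∀ h : ℝ, 0 < h →
      ‖ι (U (t+h)) - ι (U t) - ιL (Ξp (t+h) - Ξp t)‖ ≤
        ‖ι (U (0+h)) - ι (U 0) - ιL (Ξp (0+h) - Ξp 0)‖
          + (Clift * (h * ∫ x in (0:ℝ)..(t+h), n₁ x)
            + Clift * (h * ∫ x in (0:ℝ)..(t+h), n₂ x)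
            + h * ∫ x in (0:ℝ)..(t+h), n₃ x) := by
    intro h hh
    set Q : ℝ → V := fun τ => U (τ+h) - U τ - LC (Ξp (τ+h) - Ξp τ) with hQ
    set fh : ℝ → H := fun τ => ι (U (τ+h)) - ι (U τ) - ιL (Ξp (τ+h) - Ξp τ) with hfh
    set gh : ℝ → H := fun τ =>
      ιL (Ξp (τ+h) - Ξp τ) - ιL (Ξ' (τ+h) - Ξ' τ) + (F (τ+h) - F τ) with hgh
    set bb : ℝ → ℝ := fun τ => ‖gh (max τ 0)‖ with hbb
    have hmem : ∀ τ : ℝ, τ ∈ Ici (0:ℝ) → τ + h ∈ Ici (0:ℝ) := fun τ hτ => by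
      have : (0:ℝ) ≤ τ := hτ
      exact le_of_lt (by linarith : (0:ℝ) < τ + h)
    have hfhQ : ∀ τ, fh τ = ι (Q τ) := by
      intro τ
      rw [hfh, hQ]
      simp [map_sub, hιLapp, hLCapp]
    have hQB : ∀ τ ∈ Ici (0:ℝ), B (Q τ) = 0 := by
      intro τ hτ
      rw [hQ]
      have hBL : ∀ m : M₁ × M₂, B (LC m) = m.2 := fun m => (hLP m).2
      simp only [map_sub, hBL, hΞp]
      rw [hUB (τ+h) (hmem τ hτ), hUB τ hτ]
      abel
    -- derivative of fh
    have hfd : ∀ τ ∈ Ici (0:ℝ), HasDerivWithinAt fh (Astar (Q τ) + gh τ) (Ici 0) τ := by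
      intro τ hτ
      have hshift : HasDerivWithinAt (fun s : ℝ => s + h) 1 (Ici 0) τ :=
        ((hasDerivAt_id τ).add_const h).hasDerivWithinAt
      have d1 : HasDerivWithinAt (fun s => ι (U (s+h))) (D (τ+h)) (Ici 0) τ := by
        have := (hUode (τ+h) (hmem τ hτ)).scomp τ hshift (hmem)
        simpa [hD, Function.comp_def] using this
      have d2 : HasDerivWithinAt (fun s => ι (U s)) (D τ) (Ici 0) τ := hUode τ hτ
      have dΞs : HasDerivWithinAt (fun s => Ξp (s+h)) (Ξ' (τ+h)) (Ici 0) τ := by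
        have := (hΞderiv (τ+h) (hmem τ hτ)).scomp τ hshift (hmem)
        simpa [hΞp, Function.comp_def] using this
      have dΞ : HasDerivWithinAt (fun s => Ξp (s+h) - Ξp s)
          (Ξ' (τ+h) - Ξ' τ) (Ici 0) τ := dΞs.sub (hΞderiv τ hτ)
      have d3 : HasDerivWithinAt (fun s => ιL (Ξp (s+h) - Ξp s))
          (ιL (Ξ' (τ+h) - Ξ' τ)) (Ici 0) τ :=
        ιL.hasFDerivAt.comp_hasDerivWithinAt τ dΞ
      have d4 : HasDerivWithinAt (fun s => F (s+h)) (F' (τ+h)) (Ici 0) τ := by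
        exact (by simpa [Function.comp_def] using (hFderiv (τ+h) (hmem τ hτ)).scomp τ hshift (hmem))
      have dall : HasDerivWithinAt fh (D (τ+h) - D τ - ιL (Ξ' (τ+h) - Ξ' τ)) (Ici 0) τ :=
        (d1.sub d2).sub d3
      have hAe : Astar (LC (Ξp (τ+h) - Ξp τ))
          = ιL (Ξp (τ+h) - Ξp τ) - G (ξ (τ+h) - ξ τ) := by
        have h1 := (hLP (Ξp (τ+h) - Ξp τ)).1
        rw [hιLapp, hLCapp]
        rw [h1]
        have : (Ξp (τ+h) - Ξp τ).1 = ξ (τ+h) - ξ τ := by simp [hΞp]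
        rw [this]
        abel
      have heq : D (τ+h) - D τ - ιL (Ξ' (τ+h) - Ξ' τ) = Astar (Q τ) + gh τ := by
        have expand : Astar (Q τ) = Astar (U (τ+h)) - Astar (U τ)
            - Astar (LC (Ξp (τ+h) - Ξp τ)) := by
          rw [hQ]; rw [map_sub, map_sub]
        have expG : G (ξ (τ+h) - ξ τ) = G (ξ (τ+h)) - G (ξ τ) := map_sub G _ _
        rw [hD, hgh, expand, hAe, expG]
        beta_reduce
        abel
      rw [heq] at dall
      exact dall
    -- the inner-product estimate
    have hip : ∀ τ ∈ Ici (0:ℝ), ⟪Astar (Q τ) + gh τ, fh τ⟫ ≤ bb τ * ‖fh τ‖ := by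
      intro τ hτ
      have hmax : max τ 0 = τ := max_eq_left hτ
      simp only [hbb]
      rw [hmax]
      rw [hfhQ τ, inner_add_left, hskew (Q τ) (hQB τ hτ), zero_add]
      exact real_inner_le_norm _ _
    -- continuity of bb
    have hghcont : ContinuousOn gh (Ici 0) := by
      have hsh : ContinuousOn (fun s : ℝ => s + h) (Ici 0) :=
        (continuous_id.add continuous_const).continuousOn
      have c1 : ContinuousOn (fun s => Ξp (s+h) - Ξp s) (Ici 0) :=
        (hΞpcont.comp hsh hmem).sub hΞpcont
      have c2 : ContinuousOn (fun s => Ξ' (s+h) - Ξ' s) (Ici 0) :=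
        (hΞ'cont.comp hsh hmem).sub hΞ'cont
      have c3 : ContinuousOn (fun s => F (s+h) - F s) (Ici 0) :=
        (hFcont.comp hsh hmem).sub hFcont
      exact ((ιL.continuous.comp_continuousOn c1).sub
        (ιL.continuous.comp_continuousOn c2)).add c3
    have hbbcont : Continuous bb := by
      have : Continuous fun τ : ℝ => gh (max τ 0) :=
        hghcont.comp_continuous (continuous_id.max continuous_const)
          (fun x => le_max_right x 0)
      exact this.norm
    have hbb0 : ∀ τ, 0 ≤ bb τ := fun τ => norm_nonneg _
    -- energy estimate
    have hE := energy_estimate fh (fun τ => Astar (Q τ) + gh τ) bb hbbcont hbb0 hfd hip t ht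
    -- bound the integral of bb
    have hRle : (∫ τ in (0:ℝ)..t, bb τ) ≤
        Clift * (h * ∫ x in (0:ℝ)..(t+h), n₁ x)
          + Clift * (h * ∫ x in (0:ℝ)..(t+h), n₂ x)
          + h * ∫ x in (0:ℝ)..(t+h), n₃ x := by
      set P₁ : ℝ → ℝ := fun s => ∫ x in (0:ℝ)..s, n₁ x with hP₁
      set P₂ : ℝ → ℝ := fun s => ∫ x in (0:ℝ)..s, n₂ x with hP₂
      set P₃ : ℝ → ℝ := fun s => ∫ x in (0:ℝ)..s, n₃ x with hP₃
      have hP₁C : Continuous P₁ := intervalIntegral.continuous_primitive hn₁int 0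
      have hP₂C : Continuous P₂ := intervalIntegral.continuous_primitive hn₂int 0
      have hP₃C : Continuous P₃ := intervalIntegral.continuous_primitive hn₃int 0
      set R : ℝ → ℝ := fun τ =>
        Clift * (P₁ (τ+h) - P₁ τ) + Clift * (P₂ (τ+h) - P₂ τ) + (P₃ (τ+h) - P₃ τ) with hR
      have hRC : Continuous R := by
        have hsh : Continuous fun s : ℝ => s + h := continuous_id.add continuous_const
        exact ((continuous_const.mul ((hP₁C.comp hsh).sub hP₁C)).add
          (continuous_const.mul ((hP₂C.comp hsh).sub hP₂C))).add
          ((hP₃C.comp hsh).sub hP₃C)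
      have hpt : ∀ τ ∈ Icc 0 t, bb τ ≤ R τ := by
        intro τ hτ
        have hτ0 : (0:ℝ) ≤ τ := hτ.1
        have hτh : τ ≤ τ + h := by linarith
        have hmax : max τ 0 = τ := max_eq_left hτ0
        have htri : bb τ ≤ ‖ιL (Ξp (τ+h) - Ξp τ)‖ + ‖ιL (Ξ' (τ+h) - Ξ' τ)‖
            + ‖F (τ+h) - F τ‖ := by
          simp only [hbb]
          rw [hmax, hgh]
          calc ‖ιL (Ξp (τ+h) - Ξp τ) - ιL (Ξ' (τ+h) - Ξ' τ) + (F (τ+h) - F τ)‖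
              ≤ ‖ιL (Ξp (τ+h) - Ξp τ) - ιL (Ξ' (τ+h) - Ξ' τ)‖ + ‖F (τ+h) - F τ‖ :=
                norm_add_le _ _
          _ ≤ ‖ιL (Ξp (τ+h) - Ξp τ)‖ + ‖ιL (Ξ' (τ+h) - Ξ' τ)‖ + ‖F (τ+h) - F τ‖ := by
                have := norm_sub_le (ιL (Ξp (τ+h) - Ξp τ)) (ιL (Ξ' (τ+h) - Ξ' τ))
                linarith
        have h1 : ‖ιL (Ξp (τ+h) - Ξp τ)‖ ≤ Clift * (P₁ (τ+h) - P₁ τ) := by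
          calc ‖ιL (Ξp (τ+h) - Ξp τ)‖ ≤ Clift * ‖Ξp (τ+h) - Ξp τ‖ := hιLnorm _
          _ ≤ Clift * (P₁ (τ+h) - P₁ τ) :=
              mul_le_mul_of_nonneg_left (hdiff₁ τ (τ+h) hτ0 hτh) (le_of_lt hClift)
        have h2 : ‖ιL (Ξ' (τ+h) - Ξ' τ)‖ ≤ Clift * (P₂ (τ+h) - P₂ τ) := by
          calc ‖ιL (Ξ' (τ+h) - Ξ' τ)‖ ≤ Clift * ‖Ξ' (τ+h) - Ξ' τ‖ := hιLnorm _
          _ ≤ Clift * (P₂ (τ+h) - P₂ τ) :=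
              mul_le_mul_of_nonneg_left (hdiff₂ τ (τ+h) hτ0 hτh) (le_of_lt hClift)
        have h3 : ‖F (τ+h) - F τ‖ ≤ P₃ (τ+h) - P₃ τ := hdiff₃ τ (τ+h) hτ0 hτh
        simp only [hR]
        linarith
      have hint1 : (∫ τ in (0:ℝ)..t, bb τ) ≤ ∫ τ in (0:ℝ)..t, R τ :=
        intervalIntegral.integral_mono_on ht (hbbcont.intervalIntegrable 0 t)
          (hRC.intervalIntegrable 0 t) hpt
      have hsplit : (∫ τ in (0:ℝ)..t, R τ)
          = Clift * (∫ τ in (0:ℝ)..t, (P₁ (τ+h) - P₁ τ))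
            + Clift * (∫ τ in (0:ℝ)..t, (P₂ (τ+h) - P₂ τ))
            + ∫ τ in (0:ℝ)..t, (P₃ (τ+h) - P₃ τ) := by
        have hsh : Continuous fun s : ℝ => s + h := continuous_id.add continuous_const
        have i1 : IntervalIntegrable (fun τ => P₁ (τ+h) - P₁ τ) volume 0 t :=
          ((hP₁C.comp hsh).sub hP₁C).intervalIntegrable 0 t
        have i2 : IntervalIntegrable (fun τ => P₂ (τ+h) - P₂ τ) volume 0 t :=
          ((hP₂C.comp hsh).sub hP₂C).intervalIntegrable 0 t
        have i3 : IntervalIntegrable (fun τ => P₃ (τ+h) - P₃ τ) volume 0 t :=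
          ((hP₃C.comp hsh).sub hP₃C).intervalIntegrable 0 t
        rw [hR]
        rw [intervalIntegral.integral_add ((i1.const_mul Clift).add (i2.const_mul Clift)) i3,
          intervalIntegral.integral_add (i1.const_mul Clift) (i2.const_mul Clift),
          intervalIntegral.integral_const_mul, intervalIntegral.integral_const_mul]
      have k1 := primitive_shift_integral_le n₁ hn₁0 hn₁int ht hh
      have k2 := primitive_shift_integral_le n₂ hn₂0 hn₂int ht hh
      have k3 := primitive_shift_integral_le n₃ hn₃0 hn₃int ht hh
      rw [hsplit] at hint1
      have hk1 : Clift * (∫ τ in (0:ℝ)..t, (P₁ (τ+h) - P₁ τ)) ≤ Clift * (h * P₁ (t+h)) :=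
        mul_le_mul_of_nonneg_left k1 (le_of_lt hClift)
      have hk2 : Clift * (∫ τ in (0:ℝ)..t, (P₂ (τ+h) - P₂ τ)) ≤ Clift * (h * P₂ (t+h)) :=
        mul_le_mul_of_nonneg_left k2 (le_of_lt hClift)
      linarith
    have e1 : fh t = ι (U (t+h)) - ι (U t) - ιL (Ξp (t+h) - Ξp t) := rfl
    have e0 : fh 0 = ι (U (0+h)) - ι (U 0) - ιL (Ξp (0+h) - Ξp 0) := rfl
    rw [← e1, ← e0]
    linarith [hE, hRle]
  -- now take the limit h → 0⁺ along 𝓝[>] 0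
  have hP₁C : Continuous fun s => ∫ x in (0:ℝ)..s, n₁ x :=
    intervalIntegral.continuous_primitive hn₁int 0
  have hP₂C : Continuous fun s => ∫ x in (0:ℝ)..s, n₂ x :=
    intervalIntegral.continuous_primitive hn₂int 0
  have hP₃C : Continuous fun s => ∫ x in (0:ℝ)..s, n₃ x :=
    intervalIntegral.continuous_primitive hn₃int 0
  have htt : Tendsto (fun h : ℝ => t + h) (𝓝[>] (0:ℝ)) (𝓝 t) := by
    have h0 : Tendsto (fun h : ℝ => t + h) (𝓝 (0:ℝ)) (𝓝 t) := by
      simpa using (continuous_add_left t).tendsto (0:ℝ)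
    exact h0.mono_left nhdsWithin_le_nhds
  have hΦ₁lim : Tendsto (fun h : ℝ => ∫ x in (0:ℝ)..(t+h), n₁ x) (𝓝[>] (0:ℝ))
      (𝓝 (∫ x in (0:ℝ)..t, n₁ x)) := (hP₁C.tendsto t).comp htt
  have hΦ₂lim : Tendsto (fun h : ℝ => ∫ x in (0:ℝ)..(t+h), n₂ x) (𝓝[>] (0:ℝ))
      (𝓝 (∫ x in (0:ℝ)..t, n₂ x)) := (hP₂C.tendsto t).comp htt
  have hΦ₃lim : Tendsto (fun h : ℝ => ∫ x in (0:ℝ)..(t+h), n₃ x) (𝓝[>] (0:ℝ))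
      (𝓝 (∫ x in (0:ℝ)..t, n₃ x)) := (hP₃C.tendsto t).comp htt
  have hslopeU : Tendsto (fun h : ℝ => h⁻¹ • (ι (U (t+h)) - ι (U t))) (𝓝[>] (0:ℝ))
      (𝓝 (D t)) :=
    slope_tendsto_right (fun τ => ι (U τ)) (D t) ht (hUode t ht)
  have hslopeΞ : Tendsto (fun h : ℝ => ιL (h⁻¹ • (Ξp (t+h) - Ξp t))) (𝓝[>] (0:ℝ))
      (𝓝 (ιL (Ξ' t))) :=
    (ιL.continuous.tendsto _).comp (slope_tendsto_right Ξp (Ξ' t) ht (hΞderiv t ht))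
  have hA : Tendsto (fun h : ℝ =>
      h⁻¹ • (ι (U (t+h)) - ι (U t)) - ιL (h⁻¹ • (Ξp (t+h) - Ξp t))) (𝓝[>] (0:ℝ))
      (𝓝 (D t - ιL (Ξ' t))) := hslopeU.sub hslopeΞ
  have hslopeU0 : Tendsto (fun h : ℝ => h⁻¹ • (ι (U (0+h)) - ι (U 0))) (𝓝[>] (0:ℝ))
      (𝓝 (D 0)) :=
    slope_tendsto_right (fun τ => ι (U τ)) (D 0) le_rfl (hUode 0 self_mem_Ici)
  have hslopeΞ0 : Tendsto (fun h : ℝ => ιL (h⁻¹ • (Ξp (0+h) - Ξp 0))) (𝓝[>] (0:ℝ))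
      (𝓝 (ιL (Ξ' 0))) :=
    (ιL.continuous.tendsto _).comp (slope_tendsto_right Ξp (Ξ' 0) le_rfl (hΞderiv 0 self_mem_Ici))
  have hD00 : D 0 - ιL (Ξ' 0) = 0 := by
    rw [hD, hΞ'0]
    simp [hU0, hξ0, hF0]
  have hA0 : Tendsto (fun h : ℝ =>
      ‖h⁻¹ • (ι (U (0+h)) - ι (U 0)) - ιL (h⁻¹ • (Ξp (0+h) - Ξp 0))‖) (𝓝[>] (0:ℝ))
      (𝓝 0) := by
    have := (hslopeU0.sub hslopeΞ0).norm
    rw [hD00, norm_zero] at this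
    exact this
  have hRHS : Tendsto (fun h : ℝ =>
      ‖h⁻¹ • (ι (U (0+h)) - ι (U 0)) - ιL (h⁻¹ • (Ξp (0+h) - Ξp 0))‖
        + (Clift * (∫ x in (0:ℝ)..(t+h), n₁ x) + Clift * (∫ x in (0:ℝ)..(t+h), n₂ x)
          + ∫ x in (0:ℝ)..(t+h), n₃ x)) (𝓝[>] (0:ℝ))
      (𝓝 (0 + (Clift * (∫ x in (0:ℝ)..t, n₁ x) + Clift * (∫ x in (0:ℝ)..t, n₂ x)
          + ∫ x in (0:ℝ)..t, n₃ x))) :=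
    hA0.add (((hΦ₁lim.const_mul Clift).add (hΦ₂lim.const_mul Clift)).add hΦ₃lim)
  have hev : ∀ᶠ h in (𝓝[>] (0:ℝ)),
      ‖h⁻¹ • (ι (U (t+h)) - ι (U t)) - ιL (h⁻¹ • (Ξp (t+h) - Ξp t))‖
        ≤ ‖h⁻¹ • (ι (U (0+h)) - ι (U 0)) - ιL (h⁻¹ • (Ξp (0+h) - Ξp 0))‖
          + (Clift * (∫ x in (0:ℝ)..(t+h), n₁ x) + Clift * (∫ x in (0:ℝ)..(t+h), n₂ x)
            + ∫ x in (0:ℝ)..(t+h), n₃ x) := by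
    filter_upwards [self_mem_nhdsWithin] with h hh'
    have hh : 0 < h := hh'
    have hinv : (0:ℝ) < h⁻¹ := inv_pos.mpr hh
    have hm := master h hh
    have e1 : ‖h⁻¹ • (ι (U (t+h)) - ι (U t)) - ιL (h⁻¹ • (Ξp (t+h) - Ξp t))‖
        = h⁻¹ * ‖ι (U (t+h)) - ι (U t) - ιL (Ξp (t+h) - Ξp t)‖ := by
      rw [_root_.map_smul, ← smul_sub, norm_smul, Real.norm_eq_abs, abs_of_pos hinv]
    have e0 : ‖h⁻¹ • (ι (U (0+h)) - ι (U 0)) - ιL (h⁻¹ • (Ξp (0+h) - Ξp 0))‖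
        = h⁻¹ * ‖ι (U (0+h)) - ι (U 0) - ιL (Ξp (0+h) - Ξp 0)‖ := by
      rw [_root_.map_smul, ← smul_sub, norm_smul, Real.norm_eq_abs, abs_of_pos hinv]
    rw [e1, e0]
    have hmul := mul_le_mul_of_nonneg_left hm (le_of_lt hinv)
    have hne : h ≠ 0 := ne_of_gt hh
    have expand : h⁻¹ * (‖ι (U (0+h)) - ι (U 0) - ιL (Ξp (0+h) - Ξp 0)‖
        + (Clift * (h * ∫ x in (0:ℝ)..(t+h), n₁ x)
          + Clift * (h * ∫ x in (0:ℝ)..(t+h), n₂ x)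
          + h * ∫ x in (0:ℝ)..(t+h), n₃ x))
        = h⁻¹ * ‖ι (U (0+h)) - ι (U 0) - ιL (Ξp (0+h) - Ξp 0)‖
          + (Clift * (∫ x in (0:ℝ)..(t+h), n₁ x) + Clift * (∫ x in (0:ℝ)..(t+h), n₂ x)
            + ∫ x in (0:ℝ)..(t+h), n₃ x) := by
      field_simp
    rw [expand] at hmul
    exact hmul
  have hlim := le_of_tendsto_of_tendsto hA.norm hRHS hev
  rw [zero_add] at hlim
  -- conclude
  have htri : ‖D t‖ ≤ ‖ιL (Ξ' t)‖ + ‖D t - ιL (Ξ' t)‖ := by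
    calc ‖D t‖ = ‖ιL (Ξ' t) + (D t - ιL (Ξ' t))‖ := by rw [add_sub_cancel]
    _ ≤ ‖ιL (Ξ' t)‖ + ‖D t - ιL (Ξ' t)‖ := norm_add_le _ _
  have hΞ't : ‖Ξ' t‖ ≤ ∫ x in (0:ℝ)..t, n₂ x := by
    have hd := norm_diff_le_integral Ξ' Ξ'' hΞ'deriv le_rfl ht (hΞ''ii 0 t le_rfl ht)
    rw [hΞ'0, sub_zero, hagree₂ 0 t le_rfl ht] at hd
    exact hd
  have hιLΞ' : ‖ιL (Ξ' t)‖ ≤ Clift * ∫ x in (0:ℝ)..t, n₂ x :=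
    (hιLnorm _).trans (mul_le_mul_of_nonneg_left hΞ't (le_of_lt hClift))
  show ‖D t‖ ≤ _
  rw [hagree₁ 0 t le_rfl ht, hagree₂ 0 t le_rfl ht, hagree₃ 0 t le_rfl ht]
  have hring : Clift * ((∫ x in (0:ℝ)..t, n₁ x) + 2 * ∫ x in (0:ℝ)..t, n₂ x)
      + ∫ x in (0:ℝ)..t, n₃ x
      = Clift * (∫ x in (0:ℝ)..t, n₂ x)
        + (Clift * (∫ x in (0:ℝ)..t, n₁ x) + Clift * (∫ x in (0:ℝ)..t, n₂ x)
          + ∫ x in (0:ℝ)..t, n₃ x) := by ring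
  rw [hring]
  linarith [htri, hιLΞ', hlim]
end

section
/- Under the stated assumptions on the abstract evolution setting, if F ∈ W¹(H), Ξ = (ξ, χ) ∈ W²(M), and U is a solution of the evolution problem (⋆), then for all t ≥ 0: C₁⋆ ‖U(t)‖_V ≤ C_lift ( ∫₀ᵗ ‖Ξ(τ)‖_M dτ + 3 ∫₀ᵗ ‖Ξ̇(τ)‖_M dτ + 2 ∫₀ᵗ ‖Ξ̈(τ)‖_M dτ ) + ∫₀ᵗ ‖F(τ)‖_H dτ + 2 ∫₀ᵗ ‖Ḟ(τ)‖_H dτ + ‖G‖_{M₁→H} ‖Ξ(t)‖_M. (V-norm bound following Theorem 3.1.) -/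
open Set MeasureTheory Filter
open scoped RealInnerProductSpace

private lemma sqrt_sq_add_le {a ε : ℝ} (ha : 0 ≤ a) (hε : 0 ≤ ε) :
    Real.sqrt (a ^ 2 + ε) ≤ a + Real.sqrt ε := by
  have h : a ^ 2 + ε ≤ (a + Real.sqrt ε) ^ 2 := by
    have := Real.sq_sqrt hε
    nlinarith [Real.sqrt_nonneg ε, mul_nonneg ha (Real.sqrt_nonneg ε)]
  calc Real.sqrt (a ^ 2 + ε) ≤ Real.sqrt ((a + Real.sqrt ε) ^ 2) := Real.sqrt_le_sqrt h
    _ = a + Real.sqrt ε := Real.sqrt_sq (by positivity)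

/-- Energy estimate: if `y' = a + g` with `⟪a, y⟫ = 0` and `‖g‖ ≤ ψ'`, then
`‖y t‖ ≤ ‖y 0‖ + (ψ t - ψ 0)` on `Ici 0`. -/
private lemma energy_estimate_s4 {H : Type*} [NormedAddCommGroup H] [InnerProductSpace ℝ H]
    (y a g : ℝ → H) (ψ ψ' : ℝ → ℝ)
    (hy : ∀ t ∈ Ici (0:ℝ), HasDerivWithinAt y (a t + g t) (Ici 0) t)
    (hsk : ∀ t ∈ Ici (0:ℝ), ⟪a t, y t⟫ = 0)
    (hψ : ∀ t ∈ Ici (0:ℝ), HasDerivWithinAt ψ (ψ' t) (Ici 0) t)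
    (hb : ∀ t ∈ Ici (0:ℝ), ‖g t‖ ≤ ψ' t) :
    ∀ t ∈ Ici (0:ℝ), ‖y t‖ ≤ ‖y 0‖ + (ψ t - ψ 0) := by
  intro t ht
  refine le_of_forall_pos_le_add (fun ε' hε' => ?_)
  set ε : ℝ := ε' ^ 2 with hεdef
  have hε : 0 < ε := by positivity
  set d : ℝ → ℝ := fun τ => ψ τ - Real.sqrt (‖y τ‖ ^ 2 + ε) with hd
  have hden : ∀ τ ∈ interior (Ici (0:ℝ)), ∃ dv : ℝ, HasDerivAt d dv τ ∧ 0 ≤ dv := by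
    intro τ hτ
    rw [interior_Ici] at hτ
    have ht0 : (0:ℝ) < τ := hτ
    have hmem : τ ∈ Ici (0:ℝ) := le_of_lt ht0
    have hnhds : Ici (0:ℝ) ∈ nhds τ := Ici_mem_nhds ht0
    have hy' : HasDerivAt y (a τ + g τ) τ := (hy τ hmem).hasDerivAt hnhds
    have hψ' : HasDerivAt ψ (ψ' τ) τ := (hψ τ hmem).hasDerivAt hnhds
    have hn : HasDerivAt (fun s => ⟪y s, y s⟫ + ε)
        (⟪y τ, a τ + g τ⟫ + ⟪a τ + g τ, y τ⟫) τ :=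
      ((hy'.inner ℝ hy')).add_const ε
    have hpos : 0 < ‖y τ‖ ^ 2 + ε := by positivity
    have hne : ⟪y τ, y τ⟫ + ε ≠ 0 := by
      rw [real_inner_self_eq_norm_sq]; positivity
    have hsq : HasDerivAt (fun s => Real.sqrt (⟪y s, y s⟫ + ε))
        ((1 / (2 * Real.sqrt (⟪y τ, y τ⟫ + ε))) * (⟪y τ, a τ + g τ⟫ + ⟪a τ + g τ, y τ⟫)) τ :=
      (Real.hasDerivAt_sqrt hne).comp τ hn
    have hsq2 : HasDerivAt (fun s => Real.sqrt (‖y s‖ ^ 2 + ε))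
        ((1 / (2 * Real.sqrt (⟪y τ, y τ⟫ + ε))) * (⟪y τ, a τ + g τ⟫ + ⟪a τ + g τ, y τ⟫)) τ := by
      refine hsq.congr_of_eventuallyEq ?_
      filter_upwards with s
      rw [real_inner_self_eq_norm_sq]
    refine ⟨ψ' τ - (1 / (2 * Real.sqrt (⟪y τ, y τ⟫ + ε))) * (⟪y τ, a τ + g τ⟫ + ⟪a τ + g τ, y τ⟫),
      hψ'.sub hsq2, ?_⟩
    have hinner : ⟪a τ, y τ⟫ = 0 := hsk τ hmem
    have hinner' : ⟪y τ, a τ⟫ = 0 := by rw [real_inner_comm]; exact hinner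
    have h1 : ⟪y τ, a τ + g τ⟫ + ⟪a τ + g τ, y τ⟫ = 2 * ⟪g τ, y τ⟫ := by
      simp only [inner_add_right, inner_add_left, hinner, hinner']
      linarith [real_inner_comm (y τ) (g τ)]
    rw [h1, real_inner_self_eq_norm_sq]
    have hsqrt_pos : 0 < Real.sqrt (‖y τ‖ ^ 2 + ε) := Real.sqrt_pos.2 hpos
    have hyle : ‖y τ‖ ≤ Real.sqrt (‖y τ‖ ^ 2 + ε) := by
      have h := Real.sqrt_le_sqrt (le_add_of_nonneg_right hε.le : ‖y τ‖ ^ 2 ≤ ‖y τ‖ ^ 2 + ε)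
      rwa [Real.sqrt_sq (norm_nonneg _)] at h
    have hψb : ‖g τ‖ ≤ ψ' τ := hb τ hmem
    have key : (1 / (2 * Real.sqrt (‖y τ‖ ^ 2 + ε))) * (2 * ⟪g τ, y τ⟫) ≤ ψ' τ := by
      rw [div_mul_eq_mul_div, one_mul, div_le_iff₀ (by positivity)]
      calc 2 * ⟪g τ, y τ⟫ ≤ 2 * (‖g τ‖ * ‖y τ‖) := by
            nlinarith [real_inner_le_norm (g τ) (y τ)]
        _ ≤ 2 * (ψ' τ * Real.sqrt (‖y τ‖ ^ 2 + ε)) := by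
            have hgn : (0:ℝ) ≤ ‖g τ‖ := norm_nonneg _
            nlinarith [norm_nonneg (y τ)]
        _ = ψ' τ * (2 * Real.sqrt (‖y τ‖ ^ 2 + ε)) := by ring
    linarith
  have hmono : MonotoneOn d (Ici 0) := by
    apply monotoneOn_of_deriv_nonneg (convex_Ici 0)
    · refine ContinuousOn.sub (fun τ hτ => (hψ τ hτ).continuousWithinAt) ?_
      have hyc : ContinuousOn y (Ici 0) := fun τ hτ => (hy τ hτ).continuousWithinAt
      exact ContinuousOn.sqrt ((hyc.norm.pow 2).add continuousOn_const)
    · exact fun τ hτ => ((hden τ hτ).choose_spec.1).differentiableAt.differentiableWithinAt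
    · intro τ hτ
      obtain ⟨dv, hdv, hdv0⟩ := hden τ hτ
      rw [hdv.deriv]; exact hdv0
  have h0 : (0:ℝ) ∈ Ici (0:ℝ) := self_mem_Ici
  have hd0t := hmono h0 ht ht
  have hyt : ‖y t‖ ≤ Real.sqrt (‖y t‖ ^ 2 + ε) := by
    have h := Real.sqrt_le_sqrt (le_add_of_nonneg_right hε.le : ‖y t‖ ^ 2 ≤ ‖y t‖ ^ 2 + ε)
    rwa [Real.sqrt_sq (norm_nonneg _)] at h
  have hy0 : Real.sqrt (‖y 0‖ ^ 2 + ε) ≤ ‖y 0‖ + Real.sqrt ε :=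
    sqrt_sq_add_le (norm_nonneg _) (le_of_lt hε)
  have hεsq : Real.sqrt ε = ε' := by
    rw [hεdef, Real.sqrt_sq (le_of_lt hε')]
  simp only [hd] at hd0t
  linarith
open Set MeasureTheory Filter
open scoped RealInnerProductSpace

/-- A primitive of `‖g‖` for `g` continuous on `Ici 0`. -/
private lemma exists_primitive {H : Type*} [NormedAddCommGroup H] [NormedSpace ℝ H]
    (g : ℝ → H) (hg : ContinuousOn g (Ici 0)) :
    ∃ ψ : ℝ → ℝ, (∀ t ∈ Ici (0:ℝ), HasDerivWithinAt ψ (‖g t‖) (Ici 0) t) ∧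
      ∀ t ∈ Ici (0:ℝ), ψ t = ∫ τ in (0:ℝ)..t, ‖g τ‖ := by
  set N : ℝ → ℝ := fun τ => ‖g (max τ 0)‖ with hN
  have hNc : Continuous N := (hg.comp_continuous (continuous_id.max continuous_const)
      (fun x => le_max_right x 0)).norm
  refine ⟨fun t => ∫ τ in (0:ℝ)..t, N τ, ?_, ?_⟩
  · intro t ht
    have h1 := (hNc.integral_hasStrictDerivAt 0 t).hasDerivAt.hasDerivWithinAt (s := Ici 0)
    have hNt : N t = ‖g t‖ := by simp only [hN]; rw [max_eq_left ht]
    rwa [hNt] at h1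
  · intro t ht
    apply intervalIntegral.integral_congr
    intro τ hτ
    rw [uIcc_of_le ht] at hτ
    simp only [hN]
    rw [max_eq_left hτ.1]

/-- FTC wrapper on `[a,b] ⊆ [0,∞)` with derivative within `Ici 0`. -/
private lemma ftc_sub {H : Type*} [NormedAddCommGroup H] [NormedSpace ℝ H] [CompleteSpace H]
    (f f' : ℝ → H) (hf : ∀ t ∈ Ici (0:ℝ), HasDerivWithinAt f (f' t) (Ici 0) t)
    {a b : ℝ} (ha : 0 ≤ a) (hab : a ≤ b) (hint : IntervalIntegrable f' volume a b) :
    f b - f a = ∫ τ in a..b, f' τ := by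
  symm
  apply intervalIntegral.integral_eq_sub_of_hasDeriv_right_of_le hab
  · have hc : ContinuousOn f (Ici 0) := fun x hx => (hf x hx).continuousWithinAt
    exact hc.mono (fun x hx => le_trans ha hx.1)
  · intro x hx
    have hx0 : (0:ℝ) < x := lt_of_le_of_lt ha hx.1
    exact (((hf x hx0.le).hasDerivAt (Ici_mem_nhds hx0)).hasDerivWithinAt)
  · exact hint

private lemma ftc_norm_le {H : Type*} [NormedAddCommGroup H] [NormedSpace ℝ H] [CompleteSpace H]
    (f f' : ℝ → H) (hf : ∀ t ∈ Ici (0:ℝ), HasDerivWithinAt f (f' t) (Ici 0) t)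
    {a b : ℝ} (ha : 0 ≤ a) (hab : a ≤ b) (hint : IntervalIntegrable f' volume a b) :
    ‖f b - f a‖ ≤ ∫ τ in a..b, ‖f' τ‖ := by
  rw [ftc_sub f f' hf ha hab hint]
  exact intervalIntegral.norm_integral_le_integral_norm hab
open Set MeasureTheory Filter

private lemma exists_lift_clm {H V M₁ M₂ : Type*}
    [NormedAddCommGroup H] [NormedSpace ℝ H]
    [NormedAddCommGroup V] [NormedSpace ℝ V]
    [NormedAddCommGroup M₁] [NormedSpace ℝ M₁]
    [NormedAddCommGroup M₂] [NormedSpace ℝ M₂]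
    (ι : V →L[ℝ] H) (Astar : V →L[ℝ] H) (B : V →L[ℝ] M₂) (G : M₁ →L[ℝ] H)
    (Clift : ℝ)
    (hlift : ∀ Ξ : M₁ × M₂, ∃! u : V, ι u = Astar u + G Ξ.1 ∧ B u = Ξ.2)
    (hliftBound : ∀ (Ξ : M₁ × M₂) (u : V),
        (ι u = Astar u + G Ξ.1 ∧ B u = Ξ.2) → ‖ι u‖ + ‖u‖ ≤ Clift * ‖Ξ‖) :
    ∃ L : (M₁ × M₂) →L[ℝ] V, (∀ Ξ, ι (L Ξ) = Astar (L Ξ) + G Ξ.1 ∧ B (L Ξ) = Ξ.2) ∧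
      (∀ Ξ, ‖ι (L Ξ)‖ + ‖L Ξ‖ ≤ Clift * ‖Ξ‖) := by
  choose L0 hL0 hunique using hlift
  have hadd : ∀ Ξ₁ Ξ₂, L0 (Ξ₁ + Ξ₂) = L0 Ξ₁ + L0 Ξ₂ := by
    intro Ξ₁ Ξ₂
    refine (hunique (Ξ₁ + Ξ₂) (L0 Ξ₁ + L0 Ξ₂) ⟨?_, ?_⟩).symm
    · rw [map_add, (hL0 Ξ₁).1, (hL0 Ξ₂).1, map_add, Prod.fst_add, map_add]
      abel
    · rw [map_add, (hL0 Ξ₁).2, (hL0 Ξ₂).2, Prod.snd_add]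
  have hsmul : ∀ (c : ℝ) Ξ, L0 (c • Ξ) = c • L0 Ξ := by
    intro c Ξ
    refine (hunique (c • Ξ) (c • L0 Ξ) ⟨?_, ?_⟩).symm
    · rw [_root_.map_smul, (hL0 Ξ).1, _root_.map_smul, Prod.smul_fst, _root_.map_smul, smul_add]
    · rw [_root_.map_smul, (hL0 Ξ).2, Prod.smul_snd]
  have hbd : ∀ Ξ, ‖L0 Ξ‖ ≤ Clift * ‖Ξ‖ := fun Ξ =>
    le_trans (le_add_of_nonneg_left (norm_nonneg _)) (hliftBound Ξ (L0 Ξ) (hL0 Ξ))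
  let lin : (M₁ × M₂) →ₗ[ℝ] V :=
    { toFun := L0, map_add' := hadd, map_smul' := hsmul }
  exact ⟨lin.mkContinuous Clift (fun x => hbd x), fun Ξ => hL0 Ξ, fun Ξ => hliftBound Ξ (L0 Ξ) (hL0 Ξ)⟩
/-- **V-norm bound following Theorem 3.1.**  If `F ∈ W¹(H)`, `Ξ = (ξ, χ) ∈ W²(M)`
and `U` solves the evolution problem (⋆), then for all `t ≥ 0`:
`C₁⋆‖U(t)‖_V ≤ C_lift (∫₀ᵗ ‖Ξ‖ + 3∫₀ᵗ ‖Ξ̇‖ + 2∫₀ᵗ ‖Ξ̈‖) + ∫₀ᵗ ‖F‖ + 2∫₀ᵗ ‖Ḟ‖ + ‖G‖ ‖Ξ(t)‖`. -/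
theorem V_norm_bound_abstract_evolution
    {H V M₁ M₂ : Type*}
    [NormedAddCommGroup H] [InnerProductSpace ℝ H] [CompleteSpace H]
    [NormedAddCommGroup V] [InnerProductSpace ℝ V] [CompleteSpace V]
    [NormedAddCommGroup M₁] [InnerProductSpace ℝ M₁] [CompleteSpace M₁]
    [NormedAddCommGroup M₂] [InnerProductSpace ℝ M₂] [CompleteSpace M₂]
    -- continuous embedding of V into H
    (ι : V →L[ℝ] H) (hι : Function.Injective ι)
    -- the operators
    (Astar : V →L[ℝ] H) (B : V →L[ℝ] M₂) (G : M₁ →L[ℝ] H)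
    (hB : Function.Surjective B)
    -- (i) norm equivalence
    (C₁ C₂ : ℝ) (hC₁ : 0 < C₁) (hC₂ : 0 < C₂)
    (hnorm : ∀ u : V, C₁ * ‖u‖ ≤ ‖ι u‖ + ‖Astar u‖ ∧ ‖ι u‖ + ‖Astar u‖ ≤ C₂ * ‖u‖)
    -- (ii) (A u, u)_H = 0 on D(A) = ker B
    (hskew : ∀ u : V, B u = 0 → ⟪Astar u, ι u⟫ = 0)
    -- (iii) I ± A surjective from D(A) onto H
    (hsurjPlus : ∀ f : H, ∃ u : V, B u = 0 ∧ ι u + Astar u = f)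
    (hsurjMinus : ∀ f : H, ∃ u : V, B u = 0 ∧ ι u - Astar u = f)
    -- (iv) lifting property
    (Clift : ℝ) (hClift : 0 < Clift)
    (hlift : ∀ Ξ : M₁ × M₂, ∃! u : V, ι u = Astar u + G Ξ.1 ∧ B u = Ξ.2)
    (hliftBound : ∀ (Ξ : M₁ × M₂) (u : V),
        (ι u = Astar u + G Ξ.1 ∧ B u = Ξ.2) → ‖ι u‖ + ‖u‖ ≤ Clift * ‖Ξ‖)
    -- data: F ∈ W¹(H)
    (F F' : ℝ → H)
    (hF0 : F 0 = 0)
    (hFderiv : ∀ t ∈ Ici (0 : ℝ), HasDerivWithinAt F (F' t) (Ici 0) t)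
    (hF'int : IntegrableOn F' (Ioi 0))
    -- data: Ξ = (ξ, χ) ∈ W²(M)
    (ξ : ℝ → M₁) (χ : ℝ → M₂) (Ξ' Ξ'' : ℝ → M₁ × M₂)
    (hΞ0 : (ξ 0, χ 0) = (0 : M₁ × M₂)) (hΞ'0 : Ξ' 0 = 0)
    (hΞderiv : ∀ t ∈ Ici (0 : ℝ), HasDerivWithinAt (fun τ => (ξ τ, χ τ)) (Ξ' t) (Ici 0) t)
    (hΞ'deriv : ∀ t ∈ Ici (0 : ℝ), HasDerivWithinAt Ξ' (Ξ'' t) (Ici 0) t)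
    (hΞ''int : IntegrableOn Ξ'' (Ioi 0))
    -- U is a solution of the evolution problem (⋆)
    (U : ℝ → V)
    (hUcont : ContinuousOn U (Ici 0))
    (hU0 : U 0 = 0)
    (hUB : ∀ t ∈ Ici (0 : ℝ), B (U t) = χ t)
    (hUode : ∀ t ∈ Ici (0 : ℝ),
        HasDerivWithinAt (fun τ => ι (U τ)) (Astar (U t) + G (ξ t) + F t) (Ici 0) t)
    :
    ∀ t ∈ Ici (0 : ℝ),
      C₁ * ‖U t‖ ≤
        Clift * ((∫ τ in (0:ℝ)..t, ‖(ξ τ, χ τ)‖) + 3 * (∫ τ in (0:ℝ)..t, ‖Ξ' τ‖) +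
            2 * ∫ τ in (0:ℝ)..t, ‖Ξ'' τ‖) +
          (∫ τ in (0:ℝ)..t, ‖F τ‖) + 2 * (∫ τ in (0:ℝ)..t, ‖F' τ‖) +
          ‖G‖ * ‖(ξ t, χ t)‖ := by
  classical
  obtain ⟨L, hL, hLb⟩ := exists_lift_clm ι Astar B G Clift hlift hliftBound
  intro t ht
  have ht0 : (0:ℝ) ≤ t := ht
  -- abbreviations
  set Wf : ℝ → V := fun τ => U τ - L (ξ τ, χ τ) with hWf
  set Y : ℝ → H := fun τ => ι (U τ) - ι (L (ξ τ, χ τ)) with hYdef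
  set f : ℝ → H := fun τ => ι (L (ξ τ, χ τ)) + F τ - ι (L (Ξ' τ)) with hfdef
  set f' : ℝ → H := fun τ => ι (L (Ξ' τ)) + F' τ - ι (L (Ξ'' τ)) with hf'def
  set af : ℝ → H := fun τ => Astar (Wf τ) with hafdef
  have hYW : ∀ s, Y s = ι (Wf s) := fun s => (map_sub ι _ _).symm
  -- derivatives of the lifted boundary data
  have hLd : ∀ s ∈ Ici (0:ℝ), HasDerivWithinAt (fun τ => ι (L (ξ τ, χ τ)))
      (ι (L (Ξ' s))) (Ici 0) s := fun s hs =>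
    (ι.comp L).hasFDerivAt.comp_hasDerivWithinAt s (hΞderiv s hs)
  have hL'd : ∀ s ∈ Ici (0:ℝ), HasDerivWithinAt (fun τ => ι (L (Ξ' τ)))
      (ι (L (Ξ'' s))) (Ici 0) s := fun s hs =>
    (ι.comp L).hasFDerivAt.comp_hasDerivWithinAt s (hΞ'deriv s hs)
  have hfd : ∀ s ∈ Ici (0:ℝ), HasDerivWithinAt f (f' s) (Ici 0) s := fun s hs =>
    ((hLd s hs).add (hFderiv s hs)).sub (hL'd s hs)
  -- derivative of Y
  have hYd : ∀ s ∈ Ici (0:ℝ), HasDerivWithinAt Y (af s + f s) (Ici 0) s := by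
    intro s hs
    have h1 := (hUode s hs).sub (hLd s hs)
    have h2 : Astar (U s) + G (ξ s) + F s - ι (L (Ξ' s)) = af s + f s := by
      rw [hafdef, hfdef]
      simp only [hWf, map_sub]
      have := (hL (ξ s, χ s)).1
      rw [this]
      abel
    rwa [h2] at h1
  -- boundary values of W vanish
  have hBW : ∀ s ∈ Ici (0:ℝ), B (Wf s) = 0 := by
    intro s hs
    rw [hWf]
    simp only [map_sub, hUB s hs, (hL (ξ s, χ s)).2]
    abel
  -- skew-symmetry
  have hskewY : ∀ s ∈ Ici (0:ℝ), ⟪af s, Y s⟫ = 0 := fun s hs => by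
    rw [hYW s]; exact hskew (Wf s) (hBW s hs)
  -- continuity facts
  have hΞfc : ContinuousOn (fun τ => (ξ τ, χ τ)) (Ici (0:ℝ)) :=
    fun s hs => (hΞderiv s hs).continuousWithinAt
  have hΞ'c : ContinuousOn Ξ' (Ici (0:ℝ)) := fun s hs => (hΞ'deriv s hs).continuousWithinAt
  have hFc : ContinuousOn F (Ici (0:ℝ)) := fun s hs => (hFderiv s hs).continuousWithinAt
  have hfc : ContinuousOn f (Ici (0:ℝ)) := by
    rw [hfdef]
    exact (((ι.comp L).continuous.comp_continuousOn hΞfc).add hFc).sub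
      ((ι.comp L).continuous.comp_continuousOn hΞ'c)
  -- interval integrability of f'
  have hf'iv : ∀ {a b : ℝ}, 0 ≤ a → a ≤ b → IntervalIntegrable f' volume a b := by
    intro a b ha hab
    rw [intervalIntegrable_iff_integrableOn_Ioc_of_le hab]
    have hsub : Ioc a b ⊆ Ioi (0:ℝ) := fun x hx => lt_of_le_of_lt ha hx.1
    have h1 : IntegrableOn (fun τ => ι (L (Ξ' τ))) (Ioc a b) volume :=
      ((((ι.comp L).continuous.comp_continuousOn hΞ'c).mono
        (fun x (hx : x ∈ Icc a b) => le_trans ha hx.1)).integrableOn_Icc).mono_set Ioc_subset_Icc_self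
    have h2 : IntegrableOn F' (Ioc a b) volume := hF'int.mono_set hsub
    have h3 : IntegrableOn (fun τ => ι (L (Ξ'' τ))) (Ioc a b) volume :=
      (ι.comp L).integrable_comp (hΞ''int.mono_set hsub)
    exact (h1.add h2).sub h3
  have hf'niv : ∀ {a b : ℝ}, 0 ≤ a → a ≤ b → IntervalIntegrable (fun τ => ‖f' τ‖) volume a b :=
    fun {a b} ha hab => (hf'iv ha hab).norm
  -- the primitive of ‖f'‖
  set φ : ℝ → ℝ := fun s => ∫ τ in (0:ℝ)..s, ‖f' τ‖ with hφdef
  have hφadd : ∀ {a b : ℝ}, 0 ≤ a → a ≤ b → φ a + (∫ τ in a..b, ‖f' τ‖) = φ b := by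
    intro a b ha hab
    exact intervalIntegral.integral_add_adjacent_intervals (hf'niv le_rfl ha) (hf'niv ha hab)
  have hφmono : MonotoneOn φ (Ici (0:ℝ)) := by
    intro s₁ h₁ s₂ h₂ h12
    have h3 := hφadd h₁ h12
    have h4 : 0 ≤ ∫ τ in s₁..s₂, ‖f' τ‖ :=
      intervalIntegral.integral_nonneg h12 (fun u _ => norm_nonneg _)
    linarith
  have hφnonneg : ∀ s, 0 ≤ s → 0 ≤ φ s := fun s hs =>
    intervalIntegral.integral_nonneg hs (fun u _ => norm_nonneg _)
  -- pointwise FTC bound for f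
  have hfptw : ∀ (τ h : ℝ), 0 ≤ τ → 0 < h → ‖f (τ + h) - f τ‖ ≤ φ (τ + h) - φ τ := by
    intro τ h hτ hh
    have h1 := ftc_norm_le f f' hfd hτ (le_add_of_nonneg_right hh.le) (hf'iv hτ (le_add_of_nonneg_right hh.le))
    have h2 := hφadd hτ (le_add_of_nonneg_right hh.le : τ ≤ τ + h)
    linarith
  -- zero initial values
  have hΞf0 : ((ξ 0, χ 0) : M₁ × M₂) = 0 := hΞ0
  have hY0 : Y 0 = 0 := by
    rw [hYdef]; simp [hU0, hΞf0]
  have haf0 : af 0 + f 0 = 0 := by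
    rw [hafdef, hfdef, hWf]
    simp [hU0, hΞf0, hΞ'0, hF0]
  ------------------------------------------------------------------
  -- STEP 1 : bound on ‖Y t‖
  ------------------------------------------------------------------
  obtain ⟨ψ, hψd, hψval⟩ := exists_primitive f hfc
  have hYbound : ‖Y t‖ ≤ ∫ τ in (0:ℝ)..t, ‖f τ‖ := by
    have := energy_estimate_s4 Y af f ψ (fun τ => ‖f τ‖) hYd hskewY hψd
      (fun τ _ => le_rfl) t ht
    rw [hY0, norm_zero, hψval t ht, hψval 0 self_mem_Ici, intervalIntegral.integral_same] at this
    linarith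
  ------------------------------------------------------------------
  -- STEP 2 : bound on ‖af t + f t‖ (the derivative of Y)
  ------------------------------------------------------------------
  have hDbound : ‖af t + f t‖ ≤ φ t := by
    -- per-shift energy estimate
    have hkey : ∀ h δ : ℝ, 0 < h → h ≤ δ →
        ‖Y (t + h) - Y t‖ ≤ ‖Y (0 + h) - Y 0‖ + h * φ (t + δ) := by
      intro h δ hh hhδ
      have hmaps : MapsTo (fun x : ℝ => x + h) (Ici (0:ℝ)) (Ici (0:ℝ)) :=
        fun x hx => add_nonneg hx hh.le
      -- derivative of the shifted difference
      have hyhd : ∀ s ∈ Ici (0:ℝ), HasDerivWithinAt (fun τ => Y (τ + h) - Y τ)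
          ((af (s + h) - af s) + (f (s + h) - f s)) (Ici 0) s := by
        intro s hs
        have hid : HasDerivWithinAt (fun x : ℝ => x + h) 1 (Ici 0) s :=
          (hasDerivWithinAt_id s _).add_const h
        have hsft := (hYd (s + h) (add_nonneg hs hh.le)).scomp s hid hmaps
        rw [one_smul] at hsft
        have h1 := hsft.sub (hYd s hs)
        have h2 : af (s + h) + f (s + h) - (af s + f s)
            = (af (s + h) - af s) + (f (s + h) - f s) := by abel
        rwa [h2] at h1
      -- skewness for the shifted difference
      have hskh : ∀ s ∈ Ici (0:ℝ), ⟪af (s + h) - af s, Y (s + h) - Y s⟫ = 0 := by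
        intro s hs
        have e1 : af (s + h) - af s = Astar (Wf (s + h) - Wf s) := (map_sub Astar _ _).symm
        have e2 : Y (s + h) - Y s = ι (Wf (s + h) - Wf s) := by
          rw [map_sub, ← hYW, ← hYW]
        have e3 : B (Wf (s + h) - Wf s) = 0 := by
          rw [map_sub, hBW (s + h) (add_nonneg hs hh.le), hBW s hs, sub_zero]
        rw [e1, e2]
        exact hskew _ e3
      -- continuity of the shifted difference of f
      have hghc : ContinuousOn (fun τ => f (τ + h) - f τ) (Ici (0:ℝ)) :=
        (hfc.comp (continuous_id.add continuous_const).continuousOn hmaps).sub hfc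
      obtain ⟨ψh, hψhd, hψhval⟩ := exists_primitive (fun τ => f (τ + h) - f τ) hghc
      have hen := energy_estimate_s4 (fun τ => Y (τ + h) - Y τ)
        (fun τ => af (τ + h) - af τ) (fun τ => f (τ + h) - f τ)
        ψh (fun τ => ‖f (τ + h) - f τ‖) hyhd hskh hψhd (fun τ _ => le_rfl) t ht
      rw [hψhval t ht, hψhval 0 self_mem_Ici, intervalIntegral.integral_same] at hen
      -- bound the integral of the shifted difference
      have hmono_int : (∫ τ in (0:ℝ)..t, ‖f (τ + h) - f τ‖)
          ≤ ∫ τ in (0:ℝ)..t, (φ (τ + h) - φ τ) := by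
        apply intervalIntegral.integral_mono_on ht0
        · exact ((hghc.mono (by rw [uIcc_of_le ht0] at *; exact Icc_subset_Ici_self)).norm).intervalIntegrable
        · have m1 : MonotoneOn (fun τ => φ (τ + h)) (uIcc (0:ℝ) t) := by
            rw [uIcc_of_le ht0]
            intro x hx y hy hxy
            exact hφmono (add_nonneg hx.1 hh.le) (add_nonneg hy.1 hh.le) (by linarith)
          have m2 : MonotoneOn φ (uIcc (0:ℝ) t) := by
            rw [uIcc_of_le ht0]
            exact hφmono.mono Icc_subset_Ici_self
          exact (m1.intervalIntegrable).sub (m2.intervalIntegrable)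
        · intro x hx
          exact hfptw x h hx.1 hh
      -- compute / bound the right-hand integral
      have hsplit : (∫ τ in (0:ℝ)..t, (φ (τ + h) - φ τ)) ≤ h * φ (t + δ) := by
        have m1 : MonotoneOn (fun τ => φ (τ + h)) (uIcc (0:ℝ) t) := by
          rw [uIcc_of_le ht0]
          intro x hx y hy hxy
          exact hφmono (add_nonneg hx.1 hh.le) (add_nonneg hy.1 hh.le) (by linarith)
        have m2 : MonotoneOn φ (uIcc (0:ℝ) t) := by
          rw [uIcc_of_le ht0]
          exact hφmono.mono Icc_subset_Ici_self
        have hiv1 := m1.intervalIntegrable (μ := volume)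
        have hiv2 := m2.intervalIntegrable (μ := volume)
        rw [intervalIntegral.integral_sub hiv1 hiv2]
        have e1 : (∫ τ in (0:ℝ)..t, φ (τ + h)) = ∫ τ in h..(t + h), φ τ := by
          rw [intervalIntegral.integral_comp_add_right φ h, zero_add]
        -- interval integrability of φ on subintervals of [0,∞)
        have hφiv : ∀ {a b : ℝ}, 0 ≤ a → a ≤ b → IntervalIntegrable φ volume a b := by
          intro a b ha hab
          exact (hφmono.mono (by rw [uIcc_of_le hab]; exact fun x hx => le_trans ha hx.1)).intervalIntegrable
        have e2 : (∫ τ in h..(t + h), φ τ) = (∫ τ in (0:ℝ)..(t + h), φ τ) - ∫ τ in (0:ℝ)..h, φ τ := by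
          have := intervalIntegral.integral_add_adjacent_intervals
            (hφiv le_rfl hh.le) (hφiv hh.le (le_add_of_nonneg_left ht0))
          linarith
        have e3 : (∫ τ in (0:ℝ)..(t + h), φ τ) = (∫ τ in (0:ℝ)..t, φ τ) + ∫ τ in t..(t + h), φ τ :=
          (intervalIntegral.integral_add_adjacent_intervals
            (hφiv le_rfl ht0) (hφiv ht0 (le_add_of_nonneg_right hh.le))).symm
        have e4 : (∫ τ in t..(t + h), φ τ) ≤ ∫ τ in t..(t + h), φ (t + δ) := by
          have htth : t ≤ t + h := le_add_of_nonneg_right hh.le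
          have htδ0 : (0:ℝ) ≤ t + δ := by linarith
          apply intervalIntegral.integral_mono_on htth (hφiv ht0 htth) intervalIntegrable_const
          intro x hx
          exact hφmono (le_trans ht0 hx.1) htδ0 (by linarith [hx.2])
        have e5 : (∫ τ in t..(t + h), (φ (t + δ) : ℝ)) = h * φ (t + δ) := by
          rw [intervalIntegral.integral_const, smul_eq_mul]
          ring_nf
        have e6 : 0 ≤ ∫ τ in (0:ℝ)..h, φ τ :=
          intervalIntegral.integral_nonneg hh.le (fun u hu => hφnonneg u hu.1)
        linarith
      calc ‖Y (t + h) - Y t‖ ≤ ‖Y (0 + h) - Y 0‖ + ((∫ τ in (0:ℝ)..t, ‖f (τ + h) - f τ‖) - 0) := hen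
        _ ≤ ‖Y (0 + h) - Y 0‖ + h * φ (t + δ) := by linarith
    -- slope limits
    have hslope : ∀ s : ℝ, 0 ≤ s → Tendsto (fun h : ℝ => ‖h⁻¹ • (Y (s + h) - Y s)‖)
        (nhdsWithin 0 (Ioi 0)) (nhds ‖af s + f s‖) := by
      intro s hs
      have h1 : Tendsto (slope Y s) (nhdsWithin s (Ici 0 \ {s})) (nhds (af s + f s)) :=
        hasDerivWithinAt_iff_tendsto_slope.1 (hYd s hs)
      have h2 : Tendsto (fun h : ℝ => s + h) (nhdsWithin 0 (Ioi 0))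
          (nhdsWithin s (Ici 0 \ {s})) := by
        apply tendsto_nhdsWithin_of_tendsto_nhds_of_eventually_within
        · have : Tendsto (fun h : ℝ => s + h) (nhds 0) (nhds (s + 0)) :=
            (continuous_const.add continuous_id).tendsto 0
          rw [add_zero] at this
          exact this.mono_left nhdsWithin_le_nhds
        · filter_upwards [self_mem_nhdsWithin] with h hh
          exact ⟨by simp only [mem_Ici]; linarith [mem_Ioi.1 hh], by
            simp only [mem_singleton_iff]; intro hc; linarith [mem_Ioi.1 hh, hc ▸ (rfl : s + h = s + h)]⟩
      have h3 := (h1.comp h2).norm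
      apply h3.congr'
      filter_upwards [self_mem_nhdsWithin] with h hh
      have hh0 : (0:ℝ) < h := mem_Ioi.1 hh
      simp only [Function.comp_apply, slope_def_module]
      rw [add_sub_cancel_left]
    have hslope0 : Tendsto (fun h : ℝ => ‖h⁻¹ • (Y (0 + h) - Y 0)‖)
        (nhdsWithin 0 (Ioi 0)) (nhds 0) := by
      have := hslope 0 le_rfl
      rwa [haf0, norm_zero] at this
    -- for every δ > 0 : ‖af t + f t‖ ≤ φ (t + δ)
    have hstep : ∀ δ : ℝ, 0 < δ → ‖af t + f t‖ ≤ φ (t + δ) := by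
      intro δ hδ
      have hev : ∀ᶠ h in nhdsWithin (0:ℝ) (Ioi 0),
          ‖h⁻¹ • (Y (t + h) - Y t)‖ ≤ ‖h⁻¹ • (Y (0 + h) - Y 0)‖ + φ (t + δ) := by
        filter_upwards [Ioc_mem_nhdsGT_of_mem (⟨le_rfl, hδ⟩ : (0:ℝ) ∈ Ico 0 δ)] with h hh
        have hh0 : (0:ℝ) < h := hh.1
        have hk := hkey h δ hh0 hh.2
        rw [norm_smul, norm_smul, Real.norm_eq_abs, abs_inv, abs_of_pos hh0]
        have h2 := mul_le_mul_of_nonneg_left hk (inv_nonneg.mpr hh0.le)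
        have h3 : h⁻¹ * (‖Y (0 + h) - Y 0‖ + h * φ (t + δ))
            = h⁻¹ * ‖Y (0 + h) - Y 0‖ + φ (t + δ) := by
          rw [mul_add]; congr 1; rw [← mul_assoc, inv_mul_cancel₀ hh0.ne', one_mul]
        linarith
      have hR : Tendsto (fun h : ℝ => ‖h⁻¹ • (Y (0 + h) - Y 0)‖ + φ (t + δ))
          (nhdsWithin 0 (Ioi 0)) (nhds (0 + φ (t + δ))) :=
        hslope0.add tendsto_const_nhds
      have := le_of_tendsto_of_tendsto (hslope t ht0) hR hev
      rwa [zero_add] at this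
    -- let δ → 0
    have hφcont : Tendsto (fun δ : ℝ => φ (t + δ)) (nhdsWithin 0 (Ioi 0)) (nhds (φ t)) := by
      have hc : ContinuousWithinAt φ (Icc 0 (t + 1)) t := by
        apply intervalIntegral.continuousWithinAt_primitive (measure_singleton t)
        rw [min_self, max_eq_right (by linarith : (0:ℝ) ≤ t + 1)]
        exact hf'niv le_rfl (by linarith)
      have h2 : Tendsto (fun δ : ℝ => t + δ) (nhdsWithin 0 (Ioi 0))
          (nhdsWithin t (Icc 0 (t + 1))) := by
        apply tendsto_nhdsWithin_of_tendsto_nhds_of_eventually_within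
        · have : Tendsto (fun δ : ℝ => t + δ) (nhds 0) (nhds (t + 0)) :=
            (continuous_const.add continuous_id).tendsto 0
          rw [add_zero] at this
          exact this.mono_left nhdsWithin_le_nhds
        · filter_upwards [Ioc_mem_nhdsGT_of_mem (⟨le_rfl, zero_lt_one⟩ : (0:ℝ) ∈ Ico 0 1)] with δ hδ
          exact ⟨by linarith [hδ.1], by linarith [hδ.2]⟩
      exact hc.tendsto.comp h2
    exact ge_of_tendsto hφcont (eventually_nhdsWithin_of_forall (fun δ hδ => hstep δ (mem_Ioi.1 hδ)))
  ------------------------------------------------------------------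
  -- STEP 3 : assembling everything
  ------------------------------------------------------------------
  -- interval integrability (continuity based) on [0,t]
  have hcontiv : ∀ (g : ℝ → ℝ), ContinuousOn g (Ici (0:ℝ)) → IntervalIntegrable g volume 0 t :=
    fun g hg => (hg.mono (by rw [uIcc_of_le ht0]; exact Icc_subset_Ici_self)).intervalIntegrable
  have hΞ'ivt : IntervalIntegrable Ξ' volume 0 t := by
    apply ContinuousOn.intervalIntegrable
    rw [uIcc_of_le ht0]
    exact hΞ'c.mono Icc_subset_Ici_self
  have hΞ''ivt : IntervalIntegrable Ξ'' volume 0 t := by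
    rw [intervalIntegrable_iff_integrableOn_Ioc_of_le ht0]
    exact hΞ''int.mono_set Ioc_subset_Ioi_self
  have hF'ivt : IntervalIntegrable F' volume 0 t := by
    rw [intervalIntegrable_iff_integrableOn_Ioc_of_le ht0]
    exact hF'int.mono_set Ioc_subset_Ioi_self
  -- norms of lifted data
  have hLnorm : ∀ x : M₁ × M₂, ‖ι (L x)‖ ≤ Clift * ‖x‖ := fun x =>
    le_trans (le_add_of_nonneg_right (norm_nonneg _)) (hLb x)
  -- pointwise FTC consequences
  have hΞft : ‖((ξ t, χ t) : M₁ × M₂)‖ ≤ ∫ τ in (0:ℝ)..t, ‖Ξ' τ‖ := by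
    have h1 : ‖((ξ t, χ t) : M₁ × M₂) - (ξ 0, χ 0)‖ ≤ ∫ τ in (0:ℝ)..t, ‖Ξ' τ‖ :=
      ftc_norm_le (fun τ => (ξ τ, χ τ)) Ξ' hΞderiv le_rfl ht0 hΞ'ivt
    rwa [hΞf0, sub_zero] at h1
  have hΞ't : ‖Ξ' t‖ ≤ ∫ τ in (0:ℝ)..t, ‖Ξ'' τ‖ := by
    have h1 := ftc_norm_le Ξ' Ξ'' hΞ'deriv le_rfl ht0 hΞ''ivt
    rwa [hΞ'0, sub_zero] at h1
  have hFt : ‖F t‖ ≤ ∫ τ in (0:ℝ)..t, ‖F' τ‖ := by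
    have h1 := ftc_norm_le F F' hFderiv le_rfl ht0 hF'ivt
    rwa [hF0, sub_zero] at h1
  -- bound the integral of ‖f‖
  have hfint : (∫ τ in (0:ℝ)..t, ‖f τ‖) ≤
      Clift * (∫ τ in (0:ℝ)..t, ‖(ξ τ, χ τ)‖) + (∫ τ in (0:ℝ)..t, ‖F τ‖)
        + Clift * ∫ τ in (0:ℝ)..t, ‖Ξ' τ‖ := by
    have hmono := intervalIntegral.integral_mono_on ht0
      (hcontiv _ hfc.norm)
      (((hcontiv _ (continuousOn_const.mul hΞfc.norm)).add (hcontiv _ hFc.norm)).add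
        (hcontiv _ (continuousOn_const.mul hΞ'c.norm)))
      (fun x hx => by
        calc ‖f x‖ ≤ ‖ι (L (ξ x, χ x))‖ + ‖F x‖ + ‖ι (L (Ξ' x))‖ := by
              rw [hfdef]
              exact le_trans (norm_sub_le _ _) (by gcongr; exact norm_add_le _ _)
          _ ≤ Clift * ‖(ξ x, χ x)‖ + ‖F x‖ + Clift * ‖Ξ' x‖ := by
              have := hLnorm (ξ x, χ x)
              have := hLnorm (Ξ' x)
              gcongr <;> assumption
          _ = (fun τ => Clift * ‖(ξ τ, χ τ)‖ + ‖F τ‖ + Clift * ‖Ξ' τ‖) x := rfl)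
    rw [intervalIntegral.integral_add ((hcontiv _ (continuousOn_const.mul hΞfc.norm)).add
          (hcontiv _ hFc.norm)) (hcontiv _ (continuousOn_const.mul hΞ'c.norm)),
        intervalIntegral.integral_add (hcontiv _ (continuousOn_const.mul hΞfc.norm))
          (hcontiv _ hFc.norm)] at hmono
    simp only [Pi.mul_apply, intervalIntegral.integral_const_mul] at hmono
    linarith
  -- bound φ t
  have hφt : φ t ≤ Clift * (∫ τ in (0:ℝ)..t, ‖Ξ' τ‖) + (∫ τ in (0:ℝ)..t, ‖F' τ‖)
      + Clift * ∫ τ in (0:ℝ)..t, ‖Ξ'' τ‖ := by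
    have hmono := intervalIntegral.integral_mono_on ht0
      (hf'niv le_rfl ht0)
      (((hcontiv _ (continuousOn_const.mul hΞ'c.norm)).add hF'ivt.norm).add
        ((hΞ''ivt.norm).const_mul Clift))
      (fun x hx => by
        calc ‖f' x‖ ≤ ‖ι (L (Ξ' x))‖ + ‖F' x‖ + ‖ι (L (Ξ'' x))‖ := by
              rw [hf'def]
              exact le_trans (norm_sub_le _ _) (by gcongr; exact norm_add_le _ _)
          _ ≤ Clift * ‖Ξ' x‖ + ‖F' x‖ + Clift * ‖Ξ'' x‖ := by
              have := hLnorm (Ξ' x)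
              have := hLnorm (Ξ'' x)
              gcongr <;> assumption
          _ = (fun τ => Clift * ‖Ξ' τ‖ + ‖F' τ‖ + Clift * ‖Ξ'' τ‖) x := rfl)
    rw [intervalIntegral.integral_add ((hcontiv _ (continuousOn_const.mul hΞ'c.norm)).add
          hF'ivt.norm) ((hΞ''ivt.norm).const_mul Clift),
        intervalIntegral.integral_add (hcontiv _ (continuousOn_const.mul hΞ'c.norm))
          hF'ivt.norm] at hmono
    simp only [Pi.mul_apply, intervalIntegral.integral_const_mul] at hmono
    rw [hφdef]
    linarith
  -- algebraic identities
  have hAU : Astar (U t) = (af t + f t) - F t + ι (L (Ξ' t)) - G (ξ t) := by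
    rw [hafdef, hfdef, hWf]
    simp only [map_sub]
    rw [(hL (ξ t, χ t)).1]
    abel
  have hiU : ι (U t) = Y t + ι (L (ξ t, χ t)) := by
    simp [hYdef]
  -- norm bounds
  have hAUb : ‖Astar (U t)‖ ≤ ‖af t + f t‖ + ‖F t‖ + ‖ι (L (Ξ' t))‖ + ‖G (ξ t)‖ := by
    rw [hAU]
    calc ‖af t + f t - F t + ι (L (Ξ' t)) - G (ξ t)‖
        ≤ ‖af t + f t - F t + ι (L (Ξ' t))‖ + ‖G (ξ t)‖ := norm_sub_le _ _
      _ ≤ (‖af t + f t - F t‖ + ‖ι (L (Ξ' t))‖) + ‖G (ξ t)‖ := by gcongr; exact norm_add_le _ _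
      _ ≤ ((‖af t + f t‖ + ‖F t‖) + ‖ι (L (Ξ' t))‖) + ‖G (ξ t)‖ := by gcongr; exact norm_sub_le _ _
      _ = ‖af t + f t‖ + ‖F t‖ + ‖ι (L (Ξ' t))‖ + ‖G (ξ t)‖ := by ring
  have hiUb : ‖ι (U t)‖ ≤ ‖Y t‖ + ‖ι (L (ξ t, χ t))‖ := by
    rw [hiU]; exact norm_add_le _ _
  have hGb : ‖G (ξ t)‖ ≤ ‖G‖ * ‖((ξ t, χ t) : M₁ × M₂)‖ :=
    le_trans (G.le_opNorm _) (mul_le_mul_of_nonneg_left (norm_fst_le ((ξ t, χ t) : M₁ × M₂))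
      (norm_nonneg G))
  have hLΞ't : ‖ι (L (Ξ' t))‖ ≤ Clift * ∫ τ in (0:ℝ)..t, ‖Ξ'' τ‖ :=
    le_trans (hLnorm (Ξ' t)) (mul_le_mul_of_nonneg_left hΞ't hClift.le)
  have hLΞft : ‖ι (L (ξ t, χ t))‖ ≤ Clift * ∫ τ in (0:ℝ)..t, ‖Ξ' τ‖ :=
    le_trans (hLnorm ((ξ t, χ t))) (mul_le_mul_of_nonneg_left hΞft hClift.le)
  have hmain := (hnorm (U t)).1
  -- final assembly
  have hφtt := le_trans hDbound hφt
  linarith [hYbound, hfint, hFt, hGb, hLΞ't, hLΞft, hiUb, hAUb, hmain, hφtt]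
end

section
/- Let H be a real Hilbert space, D ⊆ H a linear subspace, and A : D → H a linear map such that (A u, u)_H = 0 for all u ∈ D and such that both I − A : D → H and I + A : D → H are surjective. Then D is dense in H. (Density of the domain D(A) asserted in Section 3.) -/
open Set
open scoped RealInnerProductSpace

/-- **Density of the domain `D(A)` (Section 3).**
If `A : D → H` is a linear operator on a subspace of a real Hilbert space with
`(Au, u)_H = 0` on `D` and `I ± A : D → H` surjective, then `D` is dense in `H`. -/
theorem domain_dense_of_skew_maximal
    {H : Type*} [NormedAddCommGroup H] [InnerProductSpace ℝ H] [CompleteSpace H]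
    (D : Submodule ℝ H) (A : D →ₗ[ℝ] H)
    (hskew : ∀ u : D, ⟪A u, (u : H)⟫ = 0)
    (hsurjMinus : ∀ f : H, ∃ u : D, (u : H) - A u = f)
    (hsurjPlus : ∀ f : H, ∃ u : D, (u : H) + A u = f) :
    Dense (D : Set H) := by
  rw [Submodule.dense_iff_topologicalClosure_eq_top,
    Submodule.topologicalClosure_eq_top_iff, Submodule.eq_bot_iff]
  intro w hw
  obtain ⟨u, hu⟩ := hsurjMinus w
  have h0 : ⟪(u : H), w⟫ = 0 := (Submodule.mem_orthogonal D w).mp hw u u.2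
  have hu0 : (u : H) = 0 := by
    have : ⟪(u : H), (u : H) - A u⟫ = 0 := hu ▸ h0
    rw [inner_sub_right, real_inner_comm (A u) (u : H), hskew u, sub_zero,
      real_inner_self_eq_norm_sq] at this
    have := pow_eq_zero_iff (n := 2) (by norm_num) |>.mp this
    simpa using this
  have : u = 0 := Subtype.ext hu0
  rw [← hu, this]
  simp
end

section
/- Under the stated assumptions on the abstract evolution setting, let Ξ = (ξ, χ) : [0,∞) → M be continuously differentiable with Ξ(0) = 0, let F : [0,∞) → H be continuous, and suppose U₀ : [0,∞) → D(A) = ker B is continuous as a V-valued function, continuously differentiable as an H-valued function, and satisfies U₀(0) = 0 and U̇₀(t) = A U₀(t) + F(t) + L(Ξ(t) − Ξ̇(t)) for all t ≥ 0. Then U(t) := L(Ξ(t)) + U₀(t) is continuous as a V-valued function, continuously differentiable as an H-valued function, and is a solution of the evolution problem (⋆): U(0) = 0, BU(t) = χ(t), and U̇(t) = A⋆U(t) + Gξ(t) + F(t) for all t ≥ 0. (Superposition step in the proof of Theorem 3.1.) -/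
open Set MeasureTheory
open scoped RealInnerProductSpace

/-- **Superposition step in the proof of Theorem 3.1.**  If `L` is the lifting
operator, `Ξ = (ξ, χ)` is `C¹` with `Ξ(0) = 0`, `F` is continuous, and `U₀` takes
values in `D(A) = ker B` and solves `U̇₀ = A U₀ + F + L(Ξ − Ξ̇)`, `U₀(0) = 0`, then
`U := LΞ + U₀` is a solution of the evolution problem (⋆). -/
theorem superposition_solution_abstract_evolution
    {H V M₁ M₂ : Type*}
    [NormedAddCommGroup H] [InnerProductSpace ℝ H] [CompleteSpace H]
    [NormedAddCommGroup V] [InnerProductSpace ℝ V] [CompleteSpace V]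
    [NormedAddCommGroup M₁] [InnerProductSpace ℝ M₁] [CompleteSpace M₁]
    [NormedAddCommGroup M₂] [InnerProductSpace ℝ M₂] [CompleteSpace M₂]
    -- continuous embedding of V into H
    (ι : V →L[ℝ] H) (hι : Function.Injective ι)
    -- the operators
    (Astar : V →L[ℝ] H) (B : V →L[ℝ] M₂) (G : M₁ →L[ℝ] H)
    (hB : Function.Surjective B)
    -- (i) norm equivalence
    (C₁ C₂ : ℝ) (hC₁ : 0 < C₁) (hC₂ : 0 < C₂)
    (hnorm : ∀ u : V, C₁ * ‖u‖ ≤ ‖ι u‖ + ‖Astar u‖ ∧ ‖ι u‖ + ‖Astar u‖ ≤ C₂ * ‖u‖)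
    -- (ii) (A u, u)_H = 0 on D(A) = ker B
    (hskew : ∀ u : V, B u = 0 → ⟪Astar u, ι u⟫ = 0)
    -- (iii) I ± A surjective from D(A) onto H
    (hsurjPlus : ∀ f : H, ∃ u : V, B u = 0 ∧ ι u + Astar u = f)
    (hsurjMinus : ∀ f : H, ∃ u : V, B u = 0 ∧ ι u - Astar u = f)
    -- (iv) lifting property
    (Clift : ℝ) (hClift : 0 < Clift)
    (hlift : ∀ Ξ : M₁ × M₂, ∃! u : V, ι u = Astar u + G Ξ.1 ∧ B u = Ξ.2)
    (hliftBound : ∀ (Ξ : M₁ × M₂) (u : V),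
        (ι u = Astar u + G Ξ.1 ∧ B u = Ξ.2) → ‖ι u‖ + ‖u‖ ≤ Clift * ‖Ξ‖)
    -- L is the lifting operator
    (L : (M₁ × M₂) →L[ℝ] V)
    (hL : ∀ Ξ : M₁ × M₂, ι (L Ξ) = Astar (L Ξ) + G Ξ.1 ∧ B (L Ξ) = Ξ.2)
    -- data: Ξ continuously differentiable with Ξ(0) = 0, F continuous
    (Ξ Ξ' : ℝ → M₁ × M₂)
    (hΞ0 : Ξ 0 = 0)
    (hΞderiv : ∀ t ∈ Ici (0 : ℝ), HasDerivWithinAt Ξ (Ξ' t) (Ici 0) t)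
    (hΞ'cont : ContinuousOn Ξ' (Ici 0))
    (F : ℝ → H) (hFcont : ContinuousOn F (Ici 0))
    -- U₀ : [0,∞) → D(A) = ker B solving U̇₀ = A U₀ + F + L(Ξ − Ξ̇), U₀(0) = 0
    (U₀ : ℝ → V)
    (hU₀ker : ∀ t ∈ Ici (0 : ℝ), B (U₀ t) = 0)
    (hU₀cont : ContinuousOn U₀ (Ici 0))
    (hU₀0 : U₀ 0 = 0)
    (hU₀ode : ∀ t ∈ Ici (0 : ℝ),
        HasDerivWithinAt (fun τ => ι (U₀ τ))
          (Astar (U₀ t) + F t + ι (L (Ξ t - Ξ' t))) (Ici 0) t) :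
    -- conclusion: U := LΞ + U₀ is a solution of (⋆)
    ∀ U : ℝ → V, (U = fun t => L (Ξ t) + U₀ t) →
      ContinuousOn U (Ici 0) ∧
      (ContinuousOn (fun t => Astar (U t) + G (Ξ t).1 + F t) (Ici 0)) ∧
      U 0 = 0 ∧
      (∀ t ∈ Ici (0 : ℝ), B (U t) = (Ξ t).2) ∧
      (∀ t ∈ Ici (0 : ℝ),
        HasDerivWithinAt (fun τ => ι (U τ)) (Astar (U t) + G (Ξ t).1 + F t) (Ici 0) t) := by
  intro U hU
  subst hU
  have hΞcont : ContinuousOn Ξ (Ici 0) :=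
    fun t ht => (hΞderiv t ht).continuousWithinAt
  have hUcont : ContinuousOn (fun t => L (Ξ t) + U₀ t) (Ici 0) :=
    (L.continuous.comp_continuousOn hΞcont).add hU₀cont
  refine ⟨hUcont, ?_, ?_, ?_, ?_⟩
  · exact ((Astar.continuous.comp_continuousOn hUcont).add
      (G.continuous.comp_continuousOn (continuous_fst.comp_continuousOn hΞcont))).add hFcont
  · simp [hΞ0, hU₀0]
  · intro t ht
    simp [(hL (Ξ t)).2, hU₀ker t ht]
  · intro t ht
    have h1 : HasDerivWithinAt (fun τ => ι (L (Ξ τ))) (ι (L (Ξ' t))) (Ici 0) t :=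
      ((ι.comp L).hasFDerivAt.comp_hasDerivWithinAt t (hΞderiv t ht))
    have h2 := hU₀ode t ht
    have := h1.add h2
    convert this using 1
    · ext τ; simp
    have e1 := (hL (Ξ t - Ξ' t)).1
    have e2 := (hL (Ξ' t)).1
    rw [e1, e2]
    simp only [map_add, map_sub, Prod.fst_sub]
    abel
end
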